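/- Let (C₁, Ω₁) and (C₂, Ω₂) be categories with V-faces. Then there exists a unique isomorphism φ₂ : C(C₁, Ω₁) ⊗_E C(C₂, Ω₂) ≅ C((C₁, Ω₁) × (C₂, Ω₂)) of V-dressed coalgebras such that for all X₁ ∈ C₁ and X₂ ∈ C₂, φ₂ ∘ (κ^{Ω₁}_{X₁} ⊗_E κ^{Ω₂}_{X₂}) equals (κ^{Ω₁ ⊗_R Ω₂})_{(X₁,X₂)} composed with the canonical isomorphism (Ω₁(X₁)* ⊗ Ω₁(X₁)) ⊗_E (Ω₂(X₂)* ⊗ Ω₂(X₂)) ≅ (Ω₁(X₁) ⊗_R Ω₂(X₂))* ⊗ (Ω₁(X₁) ⊗_R Ω₂(X₂)). -/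

import Mathlib

open TensorProduct


section Dressed

variable (K : Type) [Field K] (V : Type) [Fintype V] [DecidableEq V]

/-- An `E`-bimodule structure on a `K`-vector space, where `E = R̊ ⊗ R` is the
span of the orthogonal idempotents `λ̊μ` (indexed by `V × V`): commuting unital
left and right actions, encoded by the action operators of the idempotents. -/
structure EBim (C : Type) [AddCommGroup C] [Module K C] where
  /-- left action of the idempotent `λ̊μ` -/
  eL : V × V → C →ₗ[K] C
  /-- right action of the idempotent `λ̊μ` -/
  eR : V × V → C →ₗ[K] C
  eL_orth : ∀ p q : V × V, eL p ∘ₗ eL q = if p = q then eL p else 0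
  eR_orth : ∀ p q : V × V, eR p ∘ₗ eR q = if p = q then eR p else 0
  eLR_comm : ∀ p q : V × V, eL p ∘ₗ eR q = eR q ∘ₗ eL p
  sum_eL : ∑ p : V × V, eL p = LinearMap.id
  sum_eR : ∑ p : V × V, eR p = LinearMap.id

namespace EBim

variable {K V} {C : Type} [AddCommGroup C] [Module K C]

/-- left action of `λ̊` -/
def oL (B : EBim K V C) (l : V) : C →ₗ[K] C := ∑ m : V, B.eL (l, m)

/-- left action of the "plain" element `μ` -/
def pL (B : EBim K V C) (m : V) : C →ₗ[K] C := ∑ l : V, B.eL (l, m)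

/-- right action of `λ̊` -/
def oR (B : EBim K V C) (l : V) : C →ₗ[K] C := ∑ m : V, B.eR (l, m)

/-- right action of the "plain" element `μ` -/
def pR (B : EBim K V C) (m : V) : C →ₗ[K] C := ∑ l : V, B.eR (l, m)

end EBim

/-- A `V`-dressed coalgebra: a `K`-coalgebra with an `E`-bimodule structure
satisfying the compatibilities (9)–(11) of Hayashi's paper. -/
structure DressedStruct (C : Type) [AddCommGroup C] [Module K C]
    extends EBim K V C where
  comul : C →ₗ[K] C ⊗[K] C
  counit : C →ₗ[K] K
  coassoc : ∀ c : C,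
    (TensorProduct.assoc K C C C) ((TensorProduct.map comul LinearMap.id) (comul c)) =
      (TensorProduct.map LinearMap.id comul) (comul c)
  counit_comul : ∀ c : C,
    (TensorProduct.lid K C) ((TensorProduct.map counit LinearMap.id) (comul c)) = c
  comul_counit : ∀ c : C,
    (TensorProduct.rid K C) ((TensorProduct.map LinearMap.id counit) (comul c)) = c
  /-- `Δ(λ̊μ c λ̊'μ') = Σ λ̊ c₍₁₎ λ̊' ⊗ μ c₍₂₎ μ'` -/
  comul_act : ∀ (p q : V × V) (c : C),
    comul (eL p (eR q c)) =
      (TensorProduct.map (toEBim.oL p.1 ∘ₗ toEBim.oR q.1)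
        (toEBim.pL p.2 ∘ₗ toEBim.pR q.2)) (comul c)
  /-- `Σ λ c₍₁₎ μ ⊗ c₍₂₎ = Σ c₍₁₎ ⊗ λ̊ c₍₂₎ μ̊` -/
  exch : ∀ (l m : V) (c : C),
    (TensorProduct.map (toEBim.pL l ∘ₗ toEBim.pR m) LinearMap.id) (comul c) =
      (TensorProduct.map LinearMap.id (toEBim.oL l ∘ₗ toEBim.oR m)) (comul c)
  /-- `ε(λ̊ c μ̊) = ε(λ c μ)` -/
  counit_act : ∀ (l m : V) (c : C),
    counit (toEBim.oL l (toEBim.oR m c)) = counit (toEBim.pL l (toEBim.pR m c))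

/-- `f` is a map of `V`-dressed coalgebras (a coalgebra map which is also an
`E`-bimodule map). -/
def IsDrMap {C D : Type} [AddCommGroup C] [Module K C] [AddCommGroup D] [Module K D]
    (DC : DressedStruct K V C) (DD : DressedStruct K V D) (f : C →ₗ[K] D) : Prop :=
  (∀ c : C, DD.comul (f c) = (TensorProduct.map f f) (DC.comul c)) ∧
  (∀ c : C, DD.counit (f c) = DC.counit c) ∧
  (∀ (p : V × V) (c : C), f (DC.eL p c) = DD.eL p (f c)) ∧
  (∀ (p : V × V) (c : C), f (DC.eR p c) = DD.eR p (f c))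

/-- The subspace of `C ⊗[K] D` by which one divides to obtain the tensor
product `C ⊗_E D` of `E`-bimodules. -/
noncomputable def dbal {C D : Type} [AddCommGroup C] [Module K C]
    [AddCommGroup D] [Module K D] (A : EBim K V C) (B : EBim K V D) :
    Submodule K (C ⊗[K] D) :=
  Submodule.span K {z | ∃ (p : V × V) (c : C) (d : D),
    z = (A.eR p c) ⊗ₜ[K] d - c ⊗ₜ[K] (B.eL p d)}

/-- The underlying vector space of `C ⊗_E D`. -/
noncomputable abbrev DTensor {C D : Type} [AddCommGroup C] [Module K C]
    [AddCommGroup D] [Module K D] (A : EBim K V C) (B : EBim K V D) : Type :=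
  (C ⊗[K] D) ⧸ dbal K V A B

/-- The defining formulas for the `V`-dressed coalgebra structure on the tensor
product `C ⊗_E D` of two `V`-dressed coalgebras:
`Δ(c ⊗_E d) = Σ (c₍₁₎ ⊗_E d₍₁₎) ⊗ (c₍₂₎ ⊗_E d₍₂₎)`,
`ε(c ⊗_E d) = Σ_ν ε(cν) ε(νd)`, and the `E`-actions through the outer factors. -/
def IsDTensorStruct {C D : Type} [AddCommGroup C] [Module K C]
    [AddCommGroup D] [Module K D] (DC : DressedStruct K V C) (DD : DressedStruct K V D)
    (DT : DressedStruct K V (DTensor K V DC.toEBim DD.toEBim)) : Prop :=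
  (∀ (c : C) (d : D),
    DT.comul ((dbal K V DC.toEBim DD.toEBim).mkQ (c ⊗ₜ[K] d)) =
      (TensorProduct.map (dbal K V DC.toEBim DD.toEBim).mkQ
          (dbal K V DC.toEBim DD.toEBim).mkQ)
        ((TensorProduct.tensorTensorTensorComm K C C D D)
          (DC.comul c ⊗ₜ[K] DD.comul d))) ∧
  (∀ (c : C) (d : D),
    DT.counit ((dbal K V DC.toEBim DD.toEBim).mkQ (c ⊗ₜ[K] d)) =
      ∑ n : V, DC.counit (DC.toEBim.pR n c) * DD.counit (DD.toEBim.pL n d)) ∧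
  (∀ (p : V × V) (c : C) (d : D),
    DT.eL p ((dbal K V DC.toEBim DD.toEBim).mkQ (c ⊗ₜ[K] d)) =
      (dbal K V DC.toEBim DD.toEBim).mkQ ((DC.eL p c) ⊗ₜ[K] d)) ∧
  (∀ (p : V × V) (c : C) (d : D),
    DT.eR p ((dbal K V DC.toEBim DD.toEBim).mkQ (c ⊗ₜ[K] d)) =
      (dbal K V DC.toEBim DD.toEBim).mkQ (c ⊗ₜ[K] (DD.eR p d)))

/-- The `V`-dressed coalgebra `E` itself: the defining formulas on the
canonical basis `{λ̊μ}` of `E = V × V → K`. -/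
def IsEStruct (D : DressedStruct K V (V × V → K)) : Prop :=
  (∀ p : V × V, D.comul (Pi.single p 1) =
    ∑ n : V, (Pi.single (p.1, n) 1 : V × V → K) ⊗ₜ[K] (Pi.single (n, p.2) 1 : V × V → K)) ∧
  (∀ p : V × V, D.counit (Pi.single p 1) = if p.1 = p.2 then 1 else 0) ∧
  (∀ p q : V × V, D.eL p (Pi.single q 1) =
    if p = q then (Pi.single q 1 : V × V → K) else 0) ∧
  (∀ p q : V × V, D.eR p (Pi.single q 1) =
    if p = q then (Pi.single q 1 : V × V → K) else 0)

end Dressed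
section BmdR

open CategoryTheory

variable (K : Type) [Field K] (V : Type) [Fintype V] [DecidableEq V]

/-- A finite-dimensional `R`-bimodule, where `R = R_V` is the `K`-span of the
orthogonal idempotents `λ ∈ V`: a finite-dimensional `K`-vector space with
commuting unital left and right actions of `R`, encoded by the action
operators of the idempotents. -/
structure Bmd where
  M : Type
  [acg : AddCommGroup M]
  [mod : Module K M]
  [fd : FiniteDimensional K M]
  /-- left action of `λ ∈ V` -/
  aL : V → M →ₗ[K] M
  /-- right action of `λ ∈ V` -/
  aR : V → M →ₗ[K] M
  aL_orth : ∀ l m : V, aL l ∘ₗ aL m = if l = m then aL l else 0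
  aR_orth : ∀ l m : V, aR l ∘ₗ aR m = if l = m then aR l else 0
  aLR_comm : ∀ l m : V, aL l ∘ₗ aR m = aR m ∘ₗ aL l
  sum_aL : ∑ l : V, aL l = LinearMap.id
  sum_aR : ∑ l : V, aR l = LinearMap.id

attribute [instance] Bmd.acg Bmd.mod Bmd.fd

variable {K V}

/-- Maps of `R`-bimodules. -/
def IsBmdMap (M N : Bmd K V) (f : M.M →ₗ[K] N.M) : Prop :=
  (∀ l : V, f ∘ₗ M.aL l = N.aL l ∘ₗ f) ∧ (∀ l : V, f ∘ₗ M.aR l = N.aR l ∘ₗ f)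

variable (K V)

/-- The category `bmd(R)` of finite-dimensional `R`-bimodules. -/
noncomputable instance Bmd.category : Category (Bmd K V) where
  Hom M N := {f : M.M →ₗ[K] N.M // IsBmdMap M N f}
  id M := ⟨LinearMap.id, fun l => by simp, fun l => by simp⟩
  comp {M N P} f g := ⟨g.1 ∘ₗ f.1, by
    obtain ⟨fl, fr⟩ := f.2
    obtain ⟨gl, gr⟩ := g.2
    constructor
    · intro l
      rw [LinearMap.comp_assoc, fl l, ← LinearMap.comp_assoc, gl l, LinearMap.comp_assoc]
    · intro l
      rw [LinearMap.comp_assoc, fr l, ← LinearMap.comp_assoc, gr l, LinearMap.comp_assoc]⟩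
  id_comp f := Subtype.ext (LinearMap.comp_id f.1)
  comp_id f := Subtype.ext (LinearMap.id_comp f.1)
  assoc f g h := Subtype.ext (LinearMap.comp_assoc f.1 g.1 h.1).symm

variable {K V}

@[simp] lemma Bmd.id_coe (M : Bmd K V) : (𝟙 M : M ⟶ M).1 = LinearMap.id := rfl

@[simp] lemma Bmd.comp_coe {M N P : Bmd K V} (f : M ⟶ N) (g : N ⟶ P) :
    (f ≫ g).1 = g.1 ∘ₗ f.1 := rfl

end BmdR

section Coend

open CategoryTheory

variable (K : Type) [Field K] (V : Type) [Fintype V] [DecidableEq V]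
variable {C : Type} [SmallCategory C] (Ω : C ⥤ Bmd K V)

/-- The component `Ω(X)* ⊗ Ω(X)` of the functor whose coend is `C(Ω)`. -/
abbrev dMc (X : C) : Type := ((Ω.obj X).M →ₗ[K] K) ⊗[K] (Ω.obj X).M

/-- The free vector space on the pairs `(m*, m)` with `m* ∈ Ω(X)*`, `m ∈ Ω(X)`,
`X ∈ ob C`. -/
abbrev PreCoend : Type :=
  (Σ X : C, ((Ω.obj X).M →ₗ[K] K) × (Ω.obj X).M) →₀ K

/-- The relations presenting the coend `C(Ω)` of `Ω* ⊗ Ω` as a quotient of the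
free vector space `PreCoend`: bilinearity in `(m*, m)` and the coend
(dinaturality) relations `(f*(m*)) ⊗ m ∼ m* ⊗ f(m)`. -/
noncomputable def coendRel : Submodule K (PreCoend K V Ω) :=
  Submodule.span K
    ({z | ∃ (X : C) (g g' : (Ω.obj X).M →ₗ[K] K) (m : (Ω.obj X).M),
        z = Finsupp.single ⟨X, g + g', m⟩ (1 : K) -
            Finsupp.single ⟨X, g, m⟩ 1 - Finsupp.single ⟨X, g', m⟩ 1} ∪
     {z | ∃ (X : C) (c : K) (g : (Ω.obj X).M →ₗ[K] K) (m : (Ω.obj X).M),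
        z = Finsupp.single ⟨X, c • g, m⟩ (1 : K) -
            c • Finsupp.single ⟨X, g, m⟩ 1} ∪
     {z | ∃ (X : C) (g : (Ω.obj X).M →ₗ[K] K) (m m' : (Ω.obj X).M),
        z = Finsupp.single ⟨X, g, m + m'⟩ (1 : K) -
            Finsupp.single ⟨X, g, m⟩ 1 - Finsupp.single ⟨X, g, m'⟩ 1} ∪
     {z | ∃ (X : C) (c : K) (g : (Ω.obj X).M →ₗ[K] K) (m : (Ω.obj X).M),
        z = Finsupp.single ⟨X, g, c • m⟩ (1 : K) -
            c • Finsupp.single ⟨X, g, m⟩ 1} ∪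
     {z | ∃ (X Y : C) (f : X ⟶ Y) (g : (Ω.obj Y).M →ₗ[K] K) (m : (Ω.obj X).M),
        z = Finsupp.single ⟨X, g ∘ₗ (Ω.map f).1, m⟩ (1 : K) -
            Finsupp.single ⟨Y, g, (Ω.map f).1 m⟩ 1})

/-- The underlying vector space of the coend `C(Ω)` of `Ω* ⊗ Ω`. -/
noncomputable abbrev CoendT : Type := PreCoend K V Ω ⧸ coendRel K V Ω

/-- The universal dinatural transformation
`κ_X : Ω(X)* ⊗ Ω(X) → C(Ω)`. -/
noncomputable def coendK (X : C) : dMc K V Ω X →ₗ[K] CoendT K V Ω :=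
  TensorProduct.lift (LinearMap.mk₂ K
    (fun g m => (coendRel K V Ω).mkQ (Finsupp.single ⟨X, g, m⟩ (1 : K)))
    (fun g g' m => by
      beta_reduce
      rw [← map_add, Submodule.mkQ_apply, Submodule.mkQ_apply, Submodule.Quotient.eq]
      exact Submodule.subset_span (Or.inl (Or.inl (Or.inl (Or.inl
        ⟨X, g, g', m, (sub_sub _ _ _).symm⟩)))))
    (fun c g m => by
      beta_reduce
      rw [← map_smul, Submodule.mkQ_apply, Submodule.mkQ_apply, Submodule.Quotient.eq]
      exact Submodule.subset_span (Or.inl (Or.inl (Or.inl (Or.inr ⟨X, c, g, m, rfl⟩)))))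
    (fun g m m' => by
      beta_reduce
      rw [← map_add, Submodule.mkQ_apply, Submodule.mkQ_apply, Submodule.Quotient.eq]
      exact Submodule.subset_span (Or.inl (Or.inl (Or.inr
        ⟨X, g, m, m', (sub_sub _ _ _).symm⟩))))
    (fun c g m => by
      beta_reduce
      rw [← map_smul, Submodule.mkQ_apply, Submodule.mkQ_apply, Submodule.Quotient.eq]
      exact Submodule.subset_span (Or.inl (Or.inr ⟨X, c, g, m, rfl⟩))))

/-- The coalgebra comultiplication on `C(Ω)` is determined by
`Δ(κ_X(m* ⊗ m)) = Σ_j κ_X(m* ⊗ m_j) ⊗ κ_X(m^j ⊗ m)` for any finite basis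
`{m_j}` of `Ω(X)` with dual basis `{m^j}`. -/
def CoendComulSpec (comul : CoendT K V Ω →ₗ[K] CoendT K V Ω ⊗[K] CoendT K V Ω) : Prop :=
  ∀ (X : C) (ι : Type) (_ : Fintype ι) (b : Module.Basis ι K (Ω.obj X).M)
    (g : (Ω.obj X).M →ₗ[K] K) (m : (Ω.obj X).M),
    comul (coendK K V Ω X (g ⊗ₜ[K] m)) =
      ∑ j : ι, (coendK K V Ω X (g ⊗ₜ[K] b j)) ⊗ₜ[K] (coendK K V Ω X (b.coord j ⊗ₜ[K] m))

/-- The counit of `C(Ω)` is determined by `ε(κ_X(m* ⊗ m)) = ⟨m*, m⟩`. -/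
def CoendCounitSpec (counit : CoendT K V Ω →ₗ[K] K) : Prop :=
  ∀ (X : C) (g : (Ω.obj X).M →ₗ[K] K) (m : (Ω.obj X).M),
    counit (coendK K V Ω X (g ⊗ₜ[K] m)) = g m

/-- The `E`-bimodule structure of `C(Ω)`, induced by
`λ̊μ (n ⊗ m) λ̊'μ' = λ̊ n λ̊' ⊗ μ m μ'` on `Ω(X)* ⊗ Ω(X)`. -/
def CoendBimSpec (B : EBim K V (CoendT K V Ω)) : Prop :=
  ∀ (p : V × V) (X : C) (g : (Ω.obj X).M →ₗ[K] K) (m : (Ω.obj X).M),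
    B.eL p (coendK K V Ω X (g ⊗ₜ[K] m)) =
      coendK K V Ω X ((g ∘ₗ (Ω.obj X).aL p.1) ⊗ₜ[K] ((Ω.obj X).aL p.2 m)) ∧
    B.eR p (coendK K V Ω X (g ⊗ₜ[K] m)) =
      coendK K V Ω X ((g ∘ₗ (Ω.obj X).aR p.1) ⊗ₜ[K] ((Ω.obj X).aR p.2 m))

/-- The full `V`-dressed coalgebra structure of the coend `C(Ω)`. -/
def CoendDressedSpec (D : DressedStruct K V (CoendT K V Ω)) : Prop :=
  CoendComulSpec K V Ω D.comul ∧ CoendCounitSpec K V Ω D.counit ∧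
    CoendBimSpec K V Ω D.toEBim

/-- The right `C(Ω)`-comodule structure
`δ_X(m) = Σ_i m_i ⊗ κ_X(m^i ⊗ m)` on `Ω(X)`. -/
noncomputable def coendDelta (X : C) :
    (Ω.obj X).M →ₗ[K] (Ω.obj X).M ⊗[K] CoendT K V Ω :=
  ∑ i, (TensorProduct.mk K (Ω.obj X).M (CoendT K V Ω)
      (Module.finBasis K (Ω.obj X).M i)) ∘ₗ coendK K V Ω X ∘ₗ
    (TensorProduct.mk K ((Ω.obj X).M →ₗ[K] K) (Ω.obj X).M
      ((Module.finBasis K (Ω.obj X).M).coord i))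

end Coend
section RTsec

open CategoryTheory

variable {K : Type} [Field K] {V : Type} [Fintype V] [DecidableEq V]

/-- The balancing subspace of `M ⊗[K] N` defining `M ⊗_R N`. -/
noncomputable def rbal (M N : Bmd K V) : Submodule K (M.M ⊗[K] N.M) :=
  Submodule.span K {z | ∃ (l : V) (m : M.M) (n : N.M),
    z = (M.aR l m) ⊗ₜ[K] n - m ⊗ₜ[K] (N.aL l n)}

lemma rbal_left (M N : Bmd K V) (f : M.M →ₗ[K] M.M)
    (hf : ∀ l : V, f ∘ₗ M.aR l = M.aR l ∘ₗ f) :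
    rbal M N ≤ (rbal M N).comap (TensorProduct.map f LinearMap.id) := by
  rw [rbal, Submodule.span_le]
  rintro z ⟨l, m, n, rfl⟩
  simp only [SetLike.mem_coe, Submodule.mem_comap, map_sub, TensorProduct.map_tmul,
    LinearMap.id_coe, id_eq]
  have h : f (M.aR l m) = M.aR l (f m) := LinearMap.congr_fun (hf l) m
  rw [h]
  exact Submodule.subset_span ⟨l, f m, n, rfl⟩

lemma rbal_right (M N : Bmd K V) (g : N.M →ₗ[K] N.M)
    (hg : ∀ l : V, g ∘ₗ N.aL l = N.aL l ∘ₗ g) :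
    rbal M N ≤ (rbal M N).comap (TensorProduct.map LinearMap.id g) := by
  rw [rbal, Submodule.span_le]
  rintro z ⟨l, m, n, rfl⟩
  simp only [SetLike.mem_coe, Submodule.mem_comap, map_sub, TensorProduct.map_tmul,
    LinearMap.id_coe, id_eq]
  have h : g (N.aL l n) = N.aL l (g n) := LinearMap.congr_fun (hg l) n
  rw [h]
  exact Submodule.subset_span ⟨l, m, g n, rfl⟩

/-- The tensor product `M ⊗_R N` of finite-dimensional `R`-bimodules. -/
noncomputable def RT (M N : Bmd K V) : Bmd K V where
  M := (M.M ⊗[K] N.M) ⧸ rbal M N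
  aL l := Submodule.mapQ _ _ (TensorProduct.map (M.aL l) LinearMap.id)
    (rbal_left M N (M.aL l) (fun l' => M.aLR_comm l l'))
  aR l := Submodule.mapQ _ _ (TensorProduct.map LinearMap.id (N.aR l))
    (rbal_right M N (N.aR l) (fun l' => (N.aLR_comm l' l).symm))
  aL_orth := by
    intro l m
    by_cases h : l = m
    · subst h
      rw [if_pos rfl]
      apply Submodule.linearMap_qext
      apply TensorProduct.ext'
      intro x y
      simp only [LinearMap.comp_apply, Submodule.mkQ_apply, Submodule.mapQ_apply,
        TensorProduct.map_tmul, LinearMap.id_coe, id_eq]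
      have : M.aL l (M.aL l x) = M.aL l x := by
        have := LinearMap.congr_fun (M.aL_orth l l) x
        simpa using this
      rw [this]
    · rw [if_neg h]
      apply Submodule.linearMap_qext
      apply TensorProduct.ext'
      intro x y
      simp only [LinearMap.comp_apply, Submodule.mkQ_apply, Submodule.mapQ_apply,
        TensorProduct.map_tmul, LinearMap.id_coe, id_eq, LinearMap.zero_apply]
      have : M.aL l (M.aL m x) = 0 := by
        have := LinearMap.congr_fun (M.aL_orth l m) x
        simpa [h] using this
      rw [this, TensorProduct.zero_tmul]
      simp
  aR_orth := by
    intro l m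
    by_cases h : l = m
    · subst h
      rw [if_pos rfl]
      apply Submodule.linearMap_qext
      apply TensorProduct.ext'
      intro x y
      simp only [LinearMap.comp_apply, Submodule.mkQ_apply, Submodule.mapQ_apply,
        TensorProduct.map_tmul, LinearMap.id_coe, id_eq]
      have : N.aR l (N.aR l y) = N.aR l y := by
        have := LinearMap.congr_fun (N.aR_orth l l) y
        simpa using this
      rw [this]
    · rw [if_neg h]
      apply Submodule.linearMap_qext
      apply TensorProduct.ext'
      intro x y
      simp only [LinearMap.comp_apply, Submodule.mkQ_apply, Submodule.mapQ_apply,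
        TensorProduct.map_tmul, LinearMap.id_coe, id_eq, LinearMap.zero_apply]
      have : N.aR l (N.aR m y) = 0 := by
        have := LinearMap.congr_fun (N.aR_orth l m) y
        simpa [h] using this
      rw [this, TensorProduct.tmul_zero]
      simp
  aLR_comm := by
    intro l m
    apply Submodule.linearMap_qext
    apply TensorProduct.ext'
    intro x y
    simp only [LinearMap.comp_apply, Submodule.mkQ_apply, Submodule.mapQ_apply,
      TensorProduct.map_tmul, LinearMap.id_coe, id_eq]
  sum_aL := by
    apply Submodule.linearMap_qext
    apply TensorProduct.ext'
    intro x y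
    simp only [LinearMap.comp_apply, Submodule.mkQ_apply, LinearMap.coe_sum,
      Finset.sum_apply, Submodule.mapQ_apply, TensorProduct.map_tmul,
      LinearMap.id_coe, id_eq]
    simp only [← Submodule.mkQ_apply]
    rw [← map_sum]
    congr 1
    rw [← TensorProduct.sum_tmul]
    congr 1
    have := LinearMap.congr_fun M.sum_aL x
    simpa using this
  sum_aR := by
    apply Submodule.linearMap_qext
    apply TensorProduct.ext'
    intro x y
    simp only [LinearMap.comp_apply, Submodule.mkQ_apply, LinearMap.coe_sum,
      Finset.sum_apply, Submodule.mapQ_apply, TensorProduct.map_tmul,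
      LinearMap.id_coe, id_eq]
    simp only [← Submodule.mkQ_apply]
    rw [← map_sum]
    congr 1
    rw [← TensorProduct.tmul_sum]
    congr 1
    have := LinearMap.congr_fun N.sum_aR y
    simpa using this

end RTsec
section RTfunc

open CategoryTheory

variable {K : Type} [Field K] {V : Type} [Fintype V] [DecidableEq V]

lemma rbal_map {M M' N N' : Bmd K V} (f : M ⟶ M') (g : N ⟶ N') :
    rbal M N ≤ (rbal M' N').comap (TensorProduct.map f.1 g.1) := by
  rw [rbal, Submodule.span_le]
  rintro z ⟨l, m, n, rfl⟩
  simp only [SetLike.mem_coe, Submodule.mem_comap, map_sub, TensorProduct.map_tmul]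
  have h1 : f.1 (M.aR l m) = M'.aR l (f.1 m) := LinearMap.congr_fun (f.2.2 l) m
  have h2 : g.1 (N.aL l n) = N'.aL l (g.1 n) := LinearMap.congr_fun (g.2.1 l) n
  rw [h1, h2]
  exact Submodule.subset_span ⟨l, f.1 m, g.1 n, rfl⟩

/-- The functorial action of `⊗_R` on maps of `R`-bimodules. -/
noncomputable def RTmap {M M' N N' : Bmd K V} (f : M ⟶ M') (g : N ⟶ N') :
    RT M N ⟶ RT M' N' := by
  refine ⟨Submodule.mapQ _ _ (TensorProduct.map f.1 g.1) (rbal_map f g), ?_, ?_⟩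
  · intro l
    apply Submodule.linearMap_qext
    apply TensorProduct.ext'
    intro x y
    have h : f.1 ((M.aL l) x) = (M'.aL l) (f.1 x) := LinearMap.congr_fun (f.2.1 l) x
    show (rbal M' N').mkQ (f.1 (M.aL l x) ⊗ₜ[K] g.1 y) =
      (rbal M' N').mkQ (M'.aL l (f.1 x) ⊗ₜ[K] g.1 y)
    rw [h]
  · intro l
    apply Submodule.linearMap_qext
    apply TensorProduct.ext'
    intro x y
    have h : g.1 ((N.aR l) y) = (N'.aR l) (g.1 y) := LinearMap.congr_fun (g.2.2 l) y
    show (rbal M' N').mkQ (f.1 x ⊗ₜ[K] g.1 (N.aR l y)) =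
      (rbal M' N').mkQ (f.1 x ⊗ₜ[K] N'.aR l (g.1 y))
    rw [h]

variable {C₁ C₂ : Type} [SmallCategory C₁] [SmallCategory C₂]

/-- The functor `Ω₁ ⊗_R Ω₂ : C₁ × C₂ ⥤ bmd(R)`,
`(X₁, X₂) ↦ Ω₁(X₁) ⊗_R Ω₂(X₂)`. -/
noncomputable def prodOmega (K : Type) [Field K] (V : Type) [Fintype V] [DecidableEq V]
    (Ω₁ : C₁ ⥤ Bmd K V) (Ω₂ : C₂ ⥤ Bmd K V) : C₁ × C₂ ⥤ Bmd K V where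
  obj P := RT (Ω₁.obj P.1) (Ω₂.obj P.2)
  map φ := RTmap (Ω₁.map φ.1) (Ω₂.map φ.2)
  map_id P := by
    apply Subtype.ext
    apply Submodule.linearMap_qext
    apply TensorProduct.ext'
    intro x y
    simp [RTmap, RT, Submodule.mapQ_apply, Bmd.id_coe]
  map_comp φ ψ := by
    apply Subtype.ext
    apply Submodule.linearMap_qext
    apply TensorProduct.ext'
    intro x y
    simp [RTmap, Submodule.mapQ_apply, Bmd.comp_coe]
    rfl

/-- The functional `θ(m*, n*)` on `M ⊗_R N` induced by functionals
`m* : M → K`, `n* : N → K`: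
`θ(m*, n*)(m ⊗_R n) = Σ_λ m*(m λ) n*(λ n)`.  It implements the canonical
isomorphism `(M* ⊗ M) ⊗_E (N* ⊗ N) ≅ (M ⊗_R N)* ⊗ (M ⊗_R N)`. -/
noncomputable def theta (M N : Bmd K V) (f : M.M →ₗ[K] K) (g : N.M →ₗ[K] K) :
    (RT M N).M →ₗ[K] K := by
  refine Submodule.liftQ _
    (∑ l : V, (LinearMap.mul' K K) ∘ₗ TensorProduct.map (f ∘ₗ M.aR l) (g ∘ₗ N.aL l)) ?_
  rw [rbal, Submodule.span_le]
  rintro z ⟨l', m, n, rfl⟩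
  simp only [SetLike.mem_coe, LinearMap.mem_ker, map_sub, sub_eq_zero]
  rw [LinearMap.sum_apply, LinearMap.sum_apply]
  apply Finset.sum_congr rfl
  intro l _
  simp only [LinearMap.comp_apply, TensorProduct.map_tmul, LinearMap.mul'_apply]
  by_cases hl : l = l'
  · subst hl
    have h1 : M.aR l (M.aR l m) = M.aR l m := by
      simpa using LinearMap.congr_fun (M.aR_orth l l) m
    have h2 : N.aL l (N.aL l n) = N.aL l n := by
      simpa using LinearMap.congr_fun (N.aL_orth l l) n
    rw [h1, h2]
  · have h1 : M.aR l (M.aR l' m) = 0 := by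
      have := LinearMap.congr_fun (M.aR_orth l l') m
      simpa [hl] using this
    have h2 : N.aL l (N.aL l' n) = 0 := by
      have := LinearMap.congr_fun (N.aL_orth l l') n
      simpa [hl] using this
    rw [h1, h2, map_zero, map_zero, zero_mul, mul_zero]

end RTfunc
attribute [reducible] RT prodOmega
section Aux1

open CategoryTheory

variable {K : Type} [Field K] {V : Type} [Fintype V] [DecidableEq V]

lemma Bmd.aR_aR (M : Bmd K V) (l l' : V) (m : M.M) :
    M.aR l (M.aR l' m) = if l = l' then M.aR l m else 0 := by
  have h := LinearMap.congr_fun (M.aR_orth l l') m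
  by_cases hl : l = l' <;> simp [hl] at h ⊢ <;> exact h

lemma Bmd.aL_aL (M : Bmd K V) (l l' : V) (m : M.M) :
    M.aL l (M.aL l' m) = if l = l' then M.aL l m else 0 := by
  have h := LinearMap.congr_fun (M.aL_orth l l') m
  by_cases hl : l = l' <;> simp [hl] at h ⊢ <;> exact h

lemma Bmd.sum_aR_apply (M : Bmd K V) (m : M.M) : ∑ l : V, M.aR l m = m := by
  have h := LinearMap.congr_fun M.sum_aR m
  simpa using h

lemma Bmd.sum_aL_apply (M : Bmd K V) (m : M.M) : ∑ l : V, M.aL l m = m := by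
  have h := LinearMap.congr_fun M.sum_aL m
  simpa using h

variable {C : Type} [SmallCategory C]

lemma coendK_tmul (Ω : C ⥤ Bmd K V) (X : C) (g : (Ω.obj X).M →ₗ[K] K) (m : (Ω.obj X).M) :
    coendK K V Ω X (g ⊗ₜ[K] m) =
      (coendRel K V Ω).mkQ (Finsupp.single ⟨X, g, m⟩ (1 : K)) := by
  simp [coendK]

lemma coendK_dinat (Ω : C ⥤ Bmd K V) {X Y : C} (u : X ⟶ Y) (g : (Ω.obj Y).M →ₗ[K] K)
    (m : (Ω.obj X).M) :
    coendK K V Ω X ((g ∘ₗ (Ω.map u).1) ⊗ₜ[K] m) =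
      coendK K V Ω Y (g ⊗ₜ[K] (Ω.map u).1 m) := by
  rw [coendK_tmul, coendK_tmul, Submodule.mkQ_apply, Submodule.mkQ_apply,
    Submodule.Quotient.eq]
  exact Submodule.subset_span (Or.inr ⟨X, Y, u, g, m, rfl⟩)

lemma coend_hom_ext {P : Type} [AddCommGroup P] [Module K P] (Ω : C ⥤ Bmd K V)
    {f g : CoendT K V Ω →ₗ[K] P}
    (h : ∀ (X : C) (t : (Ω.obj X).M →ₗ[K] K) (m : (Ω.obj X).M),
      f (coendK K V Ω X (t ⊗ₜ[K] m)) = g (coendK K V Ω X (t ⊗ₜ[K] m))) : f = g := by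
  apply Submodule.linearMap_qext
  apply Finsupp.lhom_ext
  rintro ⟨X, t, m⟩ b
  have hb : (Finsupp.single (⟨X, t, m⟩ : Σ X : C, ((Ω.obj X).M →ₗ[K] K) × (Ω.obj X).M) b)
      = b • Finsupp.single ⟨X, t, m⟩ (1 : K) := by
    rw [Finsupp.smul_single, smul_eq_mul, mul_one]
  have h' := h X t m
  rw [coendK_tmul] at h'
  simp only [LinearMap.comp_apply, hb, map_smul, Submodule.mkQ_apply] at h' ⊢
  rw [h']

/-- RT quotient relation. -/
lemma rt_rel (M N : Bmd K V) (l : V) (m : M.M) (n : N.M) :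
    (rbal M N).mkQ ((M.aR l m) ⊗ₜ[K] n) = (rbal M N).mkQ (m ⊗ₜ[K] (N.aL l n)) := by
  rw [Submodule.mkQ_apply, Submodule.mkQ_apply, Submodule.Quotient.eq]
  exact Submodule.subset_span ⟨l, m, n, rfl⟩

lemma rt_hom_ext {P : Type} [AddCommGroup P] [Module K P] (M N : Bmd K V)
    {f g : (RT M N).M →ₗ[K] P}
    (h : ∀ (m : M.M) (n : N.M),
      f ((rbal M N).mkQ (m ⊗ₜ[K] n)) = g ((rbal M N).mkQ (m ⊗ₜ[K] n))) : f = g := by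
  apply Submodule.linearMap_qext
  apply TensorProduct.ext'
  exact h

lemma rt_aL_mk (M N : Bmd K V) (l : V) (m : M.M) (n : N.M) :
    (RT M N).aL l ((rbal M N).mkQ (m ⊗ₜ[K] n)) = (rbal M N).mkQ ((M.aL l m) ⊗ₜ[K] n) := by
  have h : (RT M N).aL l = Submodule.mapQ _ _ (TensorProduct.map (M.aL l) LinearMap.id)
      (rbal_left M N (M.aL l) (fun l' => M.aLR_comm l l')) := rfl
  rw [h, Submodule.mkQ_apply]
  erw [Submodule.mapQ_apply]

lemma rt_aR_mk (M N : Bmd K V) (l : V) (m : M.M) (n : N.M) :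
    (RT M N).aR l ((rbal M N).mkQ (m ⊗ₜ[K] n)) = (rbal M N).mkQ (m ⊗ₜ[K] (N.aR l n)) := by
  have h : (RT M N).aR l = Submodule.mapQ _ _ (TensorProduct.map LinearMap.id (N.aR l))
      (rbal_right M N (N.aR l) (fun l' => (N.aLR_comm l' l).symm)) := rfl
  rw [h, Submodule.mkQ_apply]
  erw [Submodule.mapQ_apply]

lemma RTmap_mk {M M' N N' : Bmd K V} (f : M ⟶ M') (g : N ⟶ N') (m : M.M) (n : N.M) :
    (RTmap f g).1 ((rbal M N).mkQ (m ⊗ₜ[K] n)) = (rbal M' N').mkQ ((f.1 m) ⊗ₜ[K] (g.1 n)) := by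
  have h : (RTmap f g).1 = Submodule.mapQ _ _ (TensorProduct.map f.1 g.1) (rbal_map f g) := rfl
  rw [h, Submodule.mkQ_apply]
  erw [Submodule.mapQ_apply]

lemma theta_apply (M N : Bmd K V) (f : M.M →ₗ[K] K) (g : N.M →ₗ[K] K) (m : M.M) (n : N.M) :
    theta M N f g ((rbal M N).mkQ (m ⊗ₜ[K] n)) = ∑ l : V, f (M.aR l m) * g (N.aL l n) := by
  rw [theta, Submodule.mkQ_apply]
  erw [Submodule.liftQ_apply]
  simp

end Aux1
section Aux2

open CategoryTheory

variable {K : Type} [Field K] {V : Type} [Fintype V] [DecidableEq V]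


lemma theta_apply' (M N : Bmd K V) (f : M.M →ₗ[K] K) (g : N.M →ₗ[K] K) (m : M.M) (n : N.M) :
    theta M N f g (Submodule.Quotient.mk (m ⊗ₜ[K] n)) = ∑ l : V, f (M.aR l m) * g (N.aL l n) :=
  theta_apply M N f g m n

lemma theta_add_left (M N : Bmd K V) (f f' : M.M →ₗ[K] K) (g : N.M →ₗ[K] K) :
    theta M N (f + f') g = theta M N f g + theta M N f' g := by
  apply rt_hom_ext
  intro m n
  rw [LinearMap.add_apply, theta_apply, theta_apply, theta_apply]
  simp [theta_apply, theta_apply', add_mul, Finset.sum_add_distrib]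

lemma theta_smul_left (M N : Bmd K V) (c : K) (f : M.M →ₗ[K] K) (g : N.M →ₗ[K] K) :
    theta M N (c • f) g = c • theta M N f g := by
  apply rt_hom_ext
  intro m n
  rw [LinearMap.smul_apply, theta_apply, theta_apply]
  simp [theta_apply, theta_apply', Finset.mul_sum, mul_assoc]

lemma theta_add_right (M N : Bmd K V) (f : M.M →ₗ[K] K) (g g' : N.M →ₗ[K] K) :
    theta M N f (g + g') = theta M N f g + theta M N f g' := by
  apply rt_hom_ext
  intro m n
  rw [LinearMap.add_apply, theta_apply, theta_apply, theta_apply]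
  simp [theta_apply, theta_apply', mul_add, Finset.sum_add_distrib]

lemma theta_smul_right (M N : Bmd K V) (c : K) (f : M.M →ₗ[K] K) (g : N.M →ₗ[K] K) :
    theta M N f (c • g) = c • theta M N f g := by
  apply rt_hom_ext
  intro m n
  rw [LinearMap.smul_apply, theta_apply, theta_apply]
  simp only [theta_apply, theta_apply', LinearMap.smul_apply, smul_eq_mul, Finset.mul_sum]
  apply Finset.sum_congr rfl
  intro l _
  ring

/-- `θ(f ∘ aL_l, g) = θ(f, g) ∘ aL_l` on `M ⊗_R N`. -/
lemma theta_comp_aL (M N : Bmd K V) (l : V) (f : M.M →ₗ[K] K) (g : N.M →ₗ[K] K) :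
    theta M N (f ∘ₗ M.aL l) g = theta M N f g ∘ₗ (RT M N).aL l := by
  apply rt_hom_ext
  intro m n
  rw [LinearMap.comp_apply, rt_aL_mk, theta_apply, theta_apply]
  apply Finset.sum_congr rfl
  intro l' _
  have h : M.aR l' (M.aL l m) = M.aL l (M.aR l' m) :=
    (LinearMap.congr_fun (M.aLR_comm l l') m).symm
  rw [h]
  rfl

/-- `θ(f, g ∘ aR_l) = θ(f, g) ∘ aR_l` on `M ⊗_R N`. -/
lemma theta_comp_aR (M N : Bmd K V) (l : V) (f : M.M →ₗ[K] K) (g : N.M →ₗ[K] K) :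
    theta M N f (g ∘ₗ N.aR l) = theta M N f g ∘ₗ (RT M N).aR l := by
  apply rt_hom_ext
  intro m n
  rw [LinearMap.comp_apply, rt_aR_mk, theta_apply, theta_apply]
  apply Finset.sum_congr rfl
  intro l' _
  have h : N.aL l' (N.aR l n) = N.aR l (N.aL l' n) :=
    LinearMap.congr_fun (N.aLR_comm l' l) n
  rw [h]
  rfl

/-- `θ(f ∘ aR_l, g) = θ(f, g ∘ aL_l)`. -/
lemma theta_oR_oL (M N : Bmd K V) (l : V) (f : M.M →ₗ[K] K) (g : N.M →ₗ[K] K) :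
    theta M N (f ∘ₗ M.aR l) g = theta M N f (g ∘ₗ N.aL l) := by
  apply rt_hom_ext
  intro m n
  rw [theta_apply, theta_apply]
  apply Finset.sum_congr rfl
  intro l' _
  simp only [LinearMap.comp_apply]
  rw [Bmd.aR_aR, Bmd.aL_aL]
  by_cases h : l = l' <;> simp [h]

/-- Dinaturality of `θ` with respect to `Bmd` maps. -/
lemma theta_dinat {M M' N N' : Bmd K V} (u : M ⟶ M') (v : N ⟶ N')
    (f : M'.M →ₗ[K] K) (g : N'.M →ₗ[K] K) :
    theta M N (f ∘ₗ u.1) (g ∘ₗ v.1) = theta M' N' f g ∘ₗ (RTmap u v).1 := by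
  apply rt_hom_ext
  intro m n
  rw [LinearMap.comp_apply, RTmap_mk, theta_apply, theta_apply]
  apply Finset.sum_congr rfl
  intro l _
  have h1 : u.1 (M.aR l m) = M'.aR l (u.1 m) := LinearMap.congr_fun (u.2.2 l) m
  have h2 : v.1 (N.aL l n) = N'.aL l (v.1 n) := LinearMap.congr_fun (v.2.1 l) n
  simp only [LinearMap.comp_apply, h1, h2]

/-- `Σ_l θ(f ∘ aR_l, g ∘ aL_l) = θ(f, g)`. -/
lemma theta_sum (M N : Bmd K V) (f : M.M →ₗ[K] K) (g : N.M →ₗ[K] K) :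
    ∑ l : V, theta M N (f ∘ₗ M.aR l) (g ∘ₗ N.aL l) = theta M N f g := by
  apply rt_hom_ext
  intro m n
  rw [theta_apply, LinearMap.sum_apply]
  have key : ∀ l : V, theta M N (f ∘ₗ M.aR l) (g ∘ₗ N.aL l) ((rbal M N).mkQ (m ⊗ₜ[K] n))
      = f (M.aR l m) * g (N.aL l n) := by
    intro l
    rw [theta_apply]
    rw [Finset.sum_eq_single l]
    · simp only [LinearMap.comp_apply]
      rw [Bmd.aR_aR, Bmd.aL_aL, if_pos rfl, if_pos rfl]
    · intro l' _ hl'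
      simp only [LinearMap.comp_apply]
      rw [Bmd.aR_aR, Bmd.aL_aL, if_neg (fun h => hl' h.symm), if_neg (fun h => hl' h.symm)]
      simp
    · intro h
      exact absurd (Finset.mem_univ l) h
  exact Finset.sum_congr rfl (fun l _ => key l)

/-- The `E`-balancing relation in `DTensor`. -/
lemma dt_rel {C D : Type} [AddCommGroup C] [Module K C] [AddCommGroup D] [Module K D]
    (A : EBim K V C) (B : EBim K V D) (p : V × V) (c : C) (d : D) :
    (dbal K V A B).mkQ ((A.eR p c) ⊗ₜ[K] d) = (dbal K V A B).mkQ (c ⊗ₜ[K] (B.eL p d)) := by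
  rw [Submodule.mkQ_apply, Submodule.mkQ_apply, Submodule.Quotient.eq]
  exact Submodule.subset_span ⟨p, c, d, rfl⟩

lemma dtensor_hom_ext' {C D P : Type} [AddCommGroup C] [Module K C] [AddCommGroup D]
    [Module K D] [AddCommGroup P] [Module K P] (A : EBim K V C) (B : EBim K V D)
    {f g : DTensor K V A B →ₗ[K] P}
    (h : ∀ (c : C) (d : D), f ((dbal K V A B).mkQ (c ⊗ₜ[K] d)) =
      g ((dbal K V A B).mkQ (c ⊗ₜ[K] d))) : f = g := by
  apply Submodule.linearMap_qext
  apply TensorProduct.ext'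
  exact h

end Aux2
section Aux3

open CategoryTheory

variable {K : Type} [Field K] {V : Type} [Fintype V] [DecidableEq V]
variable {C₁ C₂ : Type} [SmallCategory C₁] [SmallCategory C₂]
variable (Ω₁ : C₁ ⥤ Bmd K V) (Ω₂ : C₂ ⥤ Bmd K V)

lemma prod_dinat_right (X₁ : C₁) {X₂ Y₂ : C₂} (u : X₂ ⟶ Y₂)
    (h : ((prodOmega K V Ω₁ Ω₂).obj (X₁, Y₂)).M →ₗ[K] K)
    (w : ((prodOmega K V Ω₁ Ω₂).obj (X₁, X₂)).M) :
    coendK K V (prodOmega K V Ω₁ Ω₂) (X₁, X₂)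
        ((h ∘ₗ (RTmap (𝟙 (Ω₁.obj X₁)) (Ω₂.map u)).1) ⊗ₜ[K] w)
      = coendK K V (prodOmega K V Ω₁ Ω₂) (X₁, Y₂)
        (h ⊗ₜ[K] (RTmap (𝟙 (Ω₁.obj X₁)) (Ω₂.map u)).1 w) := by
  have e : (prodOmega K V Ω₁ Ω₂).map ((𝟙 X₁, u) : (X₁, X₂) ⟶ (X₁, Y₂))
      = RTmap (𝟙 (Ω₁.obj X₁)) (Ω₂.map u) := by
    show RTmap (Ω₁.map (𝟙 X₁)) (Ω₂.map u) = _
    rw [CategoryTheory.Functor.map_id]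
  rw [← e]
  exact coendK_dinat (prodOmega K V Ω₁ Ω₂) ((𝟙 X₁, u) : (X₁, X₂) ⟶ (X₁, Y₂)) h w

lemma prod_dinat_left {X₁ Y₁ : C₁} (u : X₁ ⟶ Y₁) (X₂ : C₂)
    (h : ((prodOmega K V Ω₁ Ω₂).obj (Y₁, X₂)).M →ₗ[K] K)
    (w : ((prodOmega K V Ω₁ Ω₂).obj (X₁, X₂)).M) :
    coendK K V (prodOmega K V Ω₁ Ω₂) (X₁, X₂)
        ((h ∘ₗ (RTmap (Ω₁.map u) (𝟙 (Ω₂.obj X₂))).1) ⊗ₜ[K] w)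
      = coendK K V (prodOmega K V Ω₁ Ω₂) (Y₁, X₂)
        (h ⊗ₜ[K] (RTmap (Ω₁.map u) (𝟙 (Ω₂.obj X₂))).1 w) := by
  have e : (prodOmega K V Ω₁ Ω₂).map ((u, 𝟙 X₂) : (X₁, X₂) ⟶ (Y₁, X₂))
      = RTmap (Ω₁.map u) (𝟙 (Ω₂.obj X₂)) := by
    show RTmap (Ω₁.map u) (Ω₂.map (𝟙 X₂)) = _
    rw [CategoryTheory.Functor.map_id]
  rw [← e]
  exact coendK_dinat (prodOmega K V Ω₁ Ω₂) ((u, 𝟙 X₂) : (X₁, X₂) ⟶ (Y₁, X₂)) h w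

/-- The inner map `CoendT Ω₂ → CoendTp` attached to `(X₁, f₁, m₁)`. -/
noncomputable def innerFun (X₁ : C₁) (f₁ : (Ω₁.obj X₁).M →ₗ[K] K) (m₁ : (Ω₁.obj X₁).M) :
    CoendT K V Ω₂ →ₗ[K] CoendT K V (prodOmega K V Ω₁ Ω₂) := by
  refine Submodule.liftQ _ (Finsupp.linearCombination K
    (fun a : Σ X₂ : C₂, ((Ω₂.obj X₂).M →ₗ[K] K) × (Ω₂.obj X₂).M =>
      coendK K V (prodOmega K V Ω₁ Ω₂) (X₁, a.1)
        (theta (Ω₁.obj X₁) (Ω₂.obj a.1) f₁ a.2.1 ⊗ₜ[K]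
          (rbal (Ω₁.obj X₁) (Ω₂.obj a.1)).mkQ (m₁ ⊗ₜ[K] a.2.2)))) ?_
  rw [coendRel, Submodule.span_le]
  rintro z ((((⟨X, g, g', m, rfl⟩ | ⟨X, c, g, m, rfl⟩) | ⟨X, g, m, m', rfl⟩) |
    ⟨X, c, g, m, rfl⟩) | ⟨X, Y, u, g, m, rfl⟩) <;>
    simp only [SetLike.mem_coe, LinearMap.mem_ker, map_sub, map_smul,
      Finsupp.linearCombination_single, one_smul, sub_eq_zero]
  · rw [theta_add_right, TensorProduct.add_tmul, map_add]
    abel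
  · rw [theta_smul_right, ← TensorProduct.smul_tmul', map_smul]
  · rw [TensorProduct.tmul_add, map_add, TensorProduct.tmul_add, map_add]
    abel
  · rw [TensorProduct.tmul_smul, map_smul, TensorProduct.tmul_smul, map_smul]
  · have ht : theta (Ω₁.obj X₁) (Ω₂.obj X) f₁ (g ∘ₗ (Ω₂.map u).1)
        = theta (Ω₁.obj X₁) (Ω₂.obj Y) f₁ g ∘ₗ (RTmap (𝟙 (Ω₁.obj X₁)) (Ω₂.map u)).1 := by
      have := theta_dinat (𝟙 (Ω₁.obj X₁)) (Ω₂.map u) f₁ g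
      simpa using this
    rw [ht, prod_dinat_right, RTmap_mk]
    simp
  
/-- Value of `innerFun` on generators. -/
lemma innerFun_k (X₁ : C₁) (f₁ : (Ω₁.obj X₁).M →ₗ[K] K) (m₁ : (Ω₁.obj X₁).M)
    (X₂ : C₂) (f₂ : (Ω₂.obj X₂).M →ₗ[K] K) (m₂ : (Ω₂.obj X₂).M) :
    innerFun Ω₁ Ω₂ X₁ f₁ m₁ (coendK K V Ω₂ X₂ (f₂ ⊗ₜ[K] m₂))
      = coendK K V (prodOmega K V Ω₁ Ω₂) (X₁, X₂)
        (theta (Ω₁.obj X₁) (Ω₂.obj X₂) f₁ f₂ ⊗ₜ[K]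
          (rbal (Ω₁.obj X₁) (Ω₂.obj X₂)).mkQ (m₁ ⊗ₜ[K] m₂)) := by
  rw [coendK_tmul, innerFun, Submodule.mkQ_apply]
  erw [Submodule.liftQ_apply]
  simp

lemma innerFun_add1 (X₁ : C₁) (f f' : (Ω₁.obj X₁).M →ₗ[K] K) (m₁ : (Ω₁.obj X₁).M) :
    innerFun Ω₁ Ω₂ X₁ (f + f') m₁ = innerFun Ω₁ Ω₂ X₁ f m₁ + innerFun Ω₁ Ω₂ X₁ f' m₁ := by
  apply coend_hom_ext
  intro X₂ f₂ m₂
  simp only [innerFun_k, LinearMap.add_apply, innerFun_k, theta_add_left,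
    TensorProduct.add_tmul, map_add]

lemma innerFun_smul1 (X₁ : C₁) (c : K) (f : (Ω₁.obj X₁).M →ₗ[K] K) (m₁ : (Ω₁.obj X₁).M) :
    innerFun Ω₁ Ω₂ X₁ (c • f) m₁ = c • innerFun Ω₁ Ω₂ X₁ f m₁ := by
  apply coend_hom_ext
  intro X₂ f₂ m₂
  simp only [innerFun_k, LinearMap.smul_apply, theta_smul_left]
  rw [← TensorProduct.smul_tmul', map_smul]

lemma innerFun_add2 (X₁ : C₁) (f : (Ω₁.obj X₁).M →ₗ[K] K) (m m' : (Ω₁.obj X₁).M) :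
    innerFun Ω₁ Ω₂ X₁ f (m + m') = innerFun Ω₁ Ω₂ X₁ f m + innerFun Ω₁ Ω₂ X₁ f m' := by
  apply coend_hom_ext
  intro X₂ f₂ m₂
  simp only [innerFun_k, LinearMap.add_apply, TensorProduct.add_tmul, map_add,
    TensorProduct.tmul_add]

lemma innerFun_smul2 (X₁ : C₁) (c : K) (f : (Ω₁.obj X₁).M →ₗ[K] K) (m : (Ω₁.obj X₁).M) :
    innerFun Ω₁ Ω₂ X₁ f (c • m) = c • innerFun Ω₁ Ω₂ X₁ f m := by
  apply coend_hom_ext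
  intro X₂ f₂ m₂
  simp only [innerFun_k, LinearMap.smul_apply]
  rw [← TensorProduct.smul_tmul', map_smul, TensorProduct.tmul_smul, map_smul]

lemma innerFun_dinat {X₁ Y₁ : C₁} (u : X₁ ⟶ Y₁) (f₁ : (Ω₁.obj Y₁).M →ₗ[K] K)
    (m₁ : (Ω₁.obj X₁).M) :
    innerFun Ω₁ Ω₂ X₁ (f₁ ∘ₗ (Ω₁.map u).1) m₁ = innerFun Ω₁ Ω₂ Y₁ f₁ ((Ω₁.map u).1 m₁) := by
  apply coend_hom_ext
  intro X₂ f₂ m₂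
  rw [innerFun_k, innerFun_k]
  have ht : theta (Ω₁.obj X₁) (Ω₂.obj X₂) (f₁ ∘ₗ (Ω₁.map u).1) f₂
      = theta (Ω₁.obj Y₁) (Ω₂.obj X₂) f₁ f₂ ∘ₗ (RTmap (Ω₁.map u) (𝟙 (Ω₂.obj X₂))).1 := by
    have := theta_dinat (Ω₁.map u) (𝟙 (Ω₂.obj X₂)) f₁ f₂
    simpa using this
  rw [ht, prod_dinat_left, RTmap_mk]
  simp

/-- The bilinear map `CoendT Ω₁ → CoendT Ω₂ → CoendT Ωp`. -/
noncomputable def phi2 :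
    CoendT K V Ω₁ →ₗ[K] CoendT K V Ω₂ →ₗ[K] CoendT K V (prodOmega K V Ω₁ Ω₂) := by
  refine Submodule.liftQ _ (Finsupp.linearCombination K
    (fun a : Σ X₁ : C₁, ((Ω₁.obj X₁).M →ₗ[K] K) × (Ω₁.obj X₁).M =>
      innerFun Ω₁ Ω₂ a.1 a.2.1 a.2.2)) ?_
  rw [coendRel, Submodule.span_le]
  rintro z ((((⟨X, g, g', m, rfl⟩ | ⟨X, c, g, m, rfl⟩) | ⟨X, g, m, m', rfl⟩) |
    ⟨X, c, g, m, rfl⟩) | ⟨X, Y, u, g, m, rfl⟩) <;>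
    simp only [SetLike.mem_coe, LinearMap.mem_ker, map_sub, map_smul,
      Finsupp.linearCombination_single, one_smul, sub_eq_zero]
  · rw [innerFun_add1]; abel
  · rw [innerFun_smul1]
  · rw [innerFun_add2]; abel
  · rw [innerFun_smul2]
  · rw [innerFun_dinat]

lemma phi2_k (X₁ : C₁) (f₁ : (Ω₁.obj X₁).M →ₗ[K] K) (m₁ : (Ω₁.obj X₁).M) :
    phi2 Ω₁ Ω₂ (coendK K V Ω₁ X₁ (f₁ ⊗ₜ[K] m₁)) = innerFun Ω₁ Ω₂ X₁ f₁ m₁ := by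
  rw [coendK_tmul, phi2, Submodule.mkQ_apply]
  erw [Submodule.liftQ_apply]
  simp

lemma phi2_kk (X₁ : C₁) (f₁ : (Ω₁.obj X₁).M →ₗ[K] K) (m₁ : (Ω₁.obj X₁).M)
    (X₂ : C₂) (f₂ : (Ω₂.obj X₂).M →ₗ[K] K) (m₂ : (Ω₂.obj X₂).M) :
    phi2 Ω₁ Ω₂ (coendK K V Ω₁ X₁ (f₁ ⊗ₜ[K] m₁)) (coendK K V Ω₂ X₂ (f₂ ⊗ₜ[K] m₂))
      = coendK K V (prodOmega K V Ω₁ Ω₂) (X₁, X₂)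
        (theta (Ω₁.obj X₁) (Ω₂.obj X₂) f₁ f₂ ⊗ₜ[K]
          (rbal (Ω₁.obj X₁) (Ω₂.obj X₂)).mkQ (m₁ ⊗ₜ[K] m₂)) := by
  rw [phi2_k, innerFun_k]

variable (B₁ : EBim K V (CoendT K V Ω₁)) (B₂ : EBim K V (CoendT K V Ω₂))
variable (hB₁ : CoendBimSpec K V Ω₁ B₁) (hB₂ : CoendBimSpec K V Ω₂ B₂)

lemma phi2_balance (hB₁ : CoendBimSpec K V Ω₁ B₁) (hB₂ : CoendBimSpec K V Ω₂ B₂)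
    (p : V × V) (c : CoendT K V Ω₁) (d : CoendT K V Ω₂) :
    phi2 Ω₁ Ω₂ (B₁.eR p c) d = phi2 Ω₁ Ω₂ c (B₂.eL p d) := by
  have hmap : phi2 Ω₁ Ω₂ ∘ₗ B₁.eR p
      = (LinearMap.lcomp K _ (B₂.eL p)) ∘ₗ phi2 Ω₁ Ω₂ := by
    apply coend_hom_ext
    intro X₁ f₁ m₁
    apply coend_hom_ext
    intro X₂ f₂ m₂
    simp only [LinearMap.comp_apply, LinearMap.lcomp_apply]
    rw [(hB₁ p X₁ f₁ m₁).2, phi2_kk, phi2_k, (hB₂ p X₂ f₂ m₂).1, innerFun_k]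
    rw [theta_oR_oL, rt_rel]
  exact LinearMap.congr_fun (LinearMap.congr_fun hmap c) d

/-- The map `φ₂ : C(Ω₁) ⊗_E C(Ω₂) → C(Ω₁ ⊗_R Ω₂)`. -/
noncomputable def Phi (hB₁ : CoendBimSpec K V Ω₁ B₁) (hB₂ : CoendBimSpec K V Ω₂ B₂) :
    DTensor K V B₁ B₂ →ₗ[K] CoendT K V (prodOmega K V Ω₁ Ω₂) := by
  refine Submodule.liftQ _ (TensorProduct.lift (phi2 Ω₁ Ω₂)) ?_
  rw [dbal, Submodule.span_le]
  rintro z ⟨p, c, d, rfl⟩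
  simp only [SetLike.mem_coe, LinearMap.mem_ker, map_sub, TensorProduct.lift.tmul,
    sub_eq_zero]
  exact phi2_balance Ω₁ Ω₂ B₁ B₂ hB₁ hB₂ p c d

lemma Phi_k (X₁ : C₁) (f₁ : (Ω₁.obj X₁).M →ₗ[K] K) (m₁ : (Ω₁.obj X₁).M)
    (X₂ : C₂) (f₂ : (Ω₂.obj X₂).M →ₗ[K] K) (m₂ : (Ω₂.obj X₂).M) :
    Phi Ω₁ Ω₂ B₁ B₂ hB₁ hB₂ ((dbal K V B₁ B₂).mkQ
        ((coendK K V Ω₁ X₁ (f₁ ⊗ₜ[K] m₁)) ⊗ₜ[K] (coendK K V Ω₂ X₂ (f₂ ⊗ₜ[K] m₂))))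
      = coendK K V (prodOmega K V Ω₁ Ω₂) (X₁, X₂)
        (theta (Ω₁.obj X₁) (Ω₂.obj X₂) f₁ f₂ ⊗ₜ[K]
          (rbal (Ω₁.obj X₁) (Ω₂.obj X₂)).mkQ (m₁ ⊗ₜ[K] m₂)) := by
  rw [Phi, Submodule.mkQ_apply]
  erw [Submodule.liftQ_apply]
  rw [TensorProduct.lift.tmul, phi2_kk]

end Aux3
section Aux4

open CategoryTheory

variable {K : Type} [Field K] {V : Type} [Fintype V] [DecidableEq V]

lemma sum_comp_aR (M : Bmd K V) (h : M.M →ₗ[K] K) : ∑ l : V, h ∘ₗ M.aR l = h := by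
  ext m
  simp only [LinearMap.coe_sum, Finset.sum_apply, LinearMap.comp_apply]
  rw [← map_sum, Bmd.sum_aR_apply]

lemma sum_comp_aL (M : Bmd K V) (h : M.M →ₗ[K] K) : ∑ l : V, h ∘ₗ M.aL l = h := by
  ext m
  simp only [LinearMap.coe_sum, Finset.sum_apply, LinearMap.comp_apply]
  rw [← map_sum, Bmd.sum_aL_apply]

variable {C : Type} [SmallCategory C]

/-- `Σ_λ (κ(h ⊗ m)) λ̊l = κ(h ⊗ aR_l m)`. -/
lemma kappa_eR_sum (Ω : C ⥤ Bmd K V) (B : EBim K V (CoendT K V Ω))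
    (hB : CoendBimSpec K V Ω B) (l : V) (X : C) (h : (Ω.obj X).M →ₗ[K] K)
    (m : (Ω.obj X).M) :
    ∑ lam : V, B.eR (lam, l) (coendK K V Ω X (h ⊗ₜ[K] m))
      = coendK K V Ω X (h ⊗ₜ[K] (Ω.obj X).aR l m) := by
  have : ∀ lam : V, B.eR (lam, l) (coendK K V Ω X (h ⊗ₜ[K] m))
      = coendK K V Ω X ((h ∘ₗ (Ω.obj X).aR lam) ⊗ₜ[K] ((Ω.obj X).aR l m)) :=
    fun lam => (hB (lam, l) X h m).2
  rw [Finset.sum_congr rfl (fun lam _ => this lam), ← map_sum]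
  congr 1
  rw [← TensorProduct.sum_tmul, sum_comp_aR]

lemma kappa_eL_sum (Ω : C ⥤ Bmd K V) (B : EBim K V (CoendT K V Ω))
    (hB : CoendBimSpec K V Ω B) (l : V) (X : C) (h : (Ω.obj X).M →ₗ[K] K)
    (m : (Ω.obj X).M) :
    ∑ lam : V, B.eL (lam, l) (coendK K V Ω X (h ⊗ₜ[K] m))
      = coendK K V Ω X (h ⊗ₜ[K] (Ω.obj X).aL l m) := by
  have : ∀ lam : V, B.eL (lam, l) (coendK K V Ω X (h ⊗ₜ[K] m))
      = coendK K V Ω X ((h ∘ₗ (Ω.obj X).aL lam) ⊗ₜ[K] ((Ω.obj X).aL l m)) :=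
    fun lam => (hB (lam, l) X h m).1
  rw [Finset.sum_congr rfl (fun lam _ => this lam), ← map_sum]
  congr 1
  rw [← TensorProduct.sum_tmul, sum_comp_aL]

/-- Slice of a functional on `M ⊗_R N` along `n ∈ N`. -/
noncomputable def gslice (M N : Bmd K V) (g : (RT M N).M →ₗ[K] K) (n : N.M) :
    M.M →ₗ[K] K :=
  g ∘ₗ (rbal M N).mkQ ∘ₗ (TensorProduct.mk K M.M N.M).flip n

lemma gslice_apply (M N : Bmd K V) (g : (RT M N).M →ₗ[K] K) (n : N.M) (m : M.M) :
    gslice M N g n m = g ((rbal M N).mkQ (m ⊗ₜ[K] n)) := rfl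

lemma gslice_add (M N : Bmd K V) (g g' : (RT M N).M →ₗ[K] K) (n : N.M) :
    gslice M N (g + g') n = gslice M N g n + gslice M N g' n := by
  ext m; simp [gslice_apply]

lemma gslice_smul (M N : Bmd K V) (c : K) (g : (RT M N).M →ₗ[K] K) (n : N.M) :
    gslice M N (c • g) n = c • gslice M N g n := by
  ext m; simp [gslice_apply]

lemma gslice_sum {ι : Type} (s : Finset ι) (M N : Bmd K V) (g : (RT M N).M →ₗ[K] K)
    (c : ι → K) (n : ι → N.M) :
    gslice M N g (∑ j ∈ s, c j • n j) = ∑ j ∈ s, c j • gslice M N g (n j) := by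
  ext m
  simp only [gslice_apply, LinearMap.coe_sum, Finset.sum_apply, LinearMap.smul_apply,
    smul_eq_mul]
  rw [TensorProduct.tmul_sum, map_sum, map_sum]
  apply Finset.sum_congr rfl
  intro j _
  rw [TensorProduct.tmul_smul, map_smul, map_smul, smul_eq_mul]

lemma gslice_dinat {M M' N N' : Bmd K V} (u : M ⟶ M') (v : N ⟶ N')
    (g : (RT M' N').M →ₗ[K] K) (n : N.M) :
    gslice M N (g ∘ₗ (RTmap u v).1) n = gslice M' N' g (v.1 n) ∘ₗ u.1 := by
  ext m
  simp only [gslice_apply, LinearMap.comp_apply, RTmap_mk]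
  rw [RTmap_mk]

variable {C₁ C₂ : Type} [SmallCategory C₁] [SmallCategory C₂]
variable (Ω₁ : C₁ ⥤ Bmd K V) (Ω₂ : C₂ ⥤ Bmd K V)
variable (B₁ : EBim K V (CoendT K V Ω₁)) (B₂ : EBim K V (CoendT K V Ω₂))

/-- Pre-quotient version of the inverse, on `Ω₁(X₁) ⊗ Ω₂(X₂)`. -/
noncomputable def psiAux0 (X₁ : C₁) (X₂ : C₂)
    (g : (RT (Ω₁.obj X₁) (Ω₂.obj X₂)).M →ₗ[K] K) :
    (Ω₁.obj X₁).M ⊗[K] (Ω₂.obj X₂).M →ₗ[K] DTensor K V B₁ B₂ :=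
  ∑ i : Fin (Module.finrank K (Ω₂.obj X₂).M),
    (dbal K V B₁ B₂).mkQ ∘ₗ TensorProduct.map
      (coendK K V Ω₁ X₁ ∘ₗ TensorProduct.mk K _ _
        (gslice (Ω₁.obj X₁) (Ω₂.obj X₂) g (Module.finBasis K (Ω₂.obj X₂).M i)))
      (coendK K V Ω₂ X₂ ∘ₗ TensorProduct.mk K _ _
        ((Module.finBasis K (Ω₂.obj X₂).M).coord i))

lemma psiAux0_apply (X₁ : C₁) (X₂ : C₂)
    (g : (RT (Ω₁.obj X₁) (Ω₂.obj X₂)).M →ₗ[K] K) (m₁ : (Ω₁.obj X₁).M)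
    (m₂ : (Ω₂.obj X₂).M) :
    psiAux0 Ω₁ Ω₂ B₁ B₂ X₁ X₂ g (m₁ ⊗ₜ[K] m₂)
      = ∑ i : Fin (Module.finrank K (Ω₂.obj X₂).M),
        (dbal K V B₁ B₂).mkQ
          ((coendK K V Ω₁ X₁
              ((gslice (Ω₁.obj X₁) (Ω₂.obj X₂) g (Module.finBasis K (Ω₂.obj X₂).M i))
                ⊗ₜ[K] m₁)) ⊗ₜ[K]
            (coendK K V Ω₂ X₂ (((Module.finBasis K (Ω₂.obj X₂).M).coord i) ⊗ₜ[K] m₂))) := by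
  rw [psiAux0, LinearMap.sum_apply]
  apply Finset.sum_congr rfl
  intro i _
  simp

/-- The inverse on a fixed object, descended to `Ω₁(X₁) ⊗_R Ω₂(X₂)`. -/
noncomputable def psiAux (hB₁ : CoendBimSpec K V Ω₁ B₁) (hB₂ : CoendBimSpec K V Ω₂ B₂)
    (X₁ : C₁) (X₂ : C₂) (g : (RT (Ω₁.obj X₁) (Ω₂.obj X₂)).M →ₗ[K] K) :
    (RT (Ω₁.obj X₁) (Ω₂.obj X₂)).M →ₗ[K] DTensor K V B₁ B₂ := by
  refine Submodule.liftQ _ (psiAux0 Ω₁ Ω₂ B₁ B₂ X₁ X₂ g) ?_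
  rw [rbal, Submodule.span_le]
  rintro z ⟨l, m, n, rfl⟩
  simp only [SetLike.mem_coe, LinearMap.mem_ker, map_sub, sub_eq_zero,
    psiAux0_apply]
  apply Finset.sum_congr rfl
  intro i _
  rw [← kappa_eR_sum Ω₁ B₁ hB₁ l X₁ _ m, ← kappa_eL_sum Ω₂ B₂ hB₂ l X₂ _ n,
    TensorProduct.sum_tmul, map_sum, TensorProduct.tmul_sum, map_sum]
  apply Finset.sum_congr rfl
  intro lam _
  exact dt_rel B₁ B₂ (lam, l) _ _

lemma psiAux_mk (hB₁ : CoendBimSpec K V Ω₁ B₁) (hB₂ : CoendBimSpec K V Ω₂ B₂)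
    (X₁ : C₁) (X₂ : C₂) (g : (RT (Ω₁.obj X₁) (Ω₂.obj X₂)).M →ₗ[K] K)
    (m₁ : (Ω₁.obj X₁).M) (m₂ : (Ω₂.obj X₂).M) :
    psiAux Ω₁ Ω₂ B₁ B₂ hB₁ hB₂ X₁ X₂ g
        ((rbal (Ω₁.obj X₁) (Ω₂.obj X₂)).mkQ (m₁ ⊗ₜ[K] m₂))
      = psiAux0 Ω₁ Ω₂ B₁ B₂ X₁ X₂ g (m₁ ⊗ₜ[K] m₂) := by
  rw [psiAux, Submodule.mkQ_apply]
  erw [Submodule.liftQ_apply]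

end Aux4
section Aux5

open CategoryTheory

variable {K : Type} [Field K] {V : Type} [Fintype V] [DecidableEq V]
variable {C₁ C₂ : Type} [SmallCategory C₁] [SmallCategory C₂]
variable (Ω₁ : C₁ ⥤ Bmd K V) (Ω₂ : C₂ ⥤ Bmd K V)
variable (B₁ : EBim K V (CoendT K V Ω₁)) (B₂ : EBim K V (CoendT K V Ω₂))
variable (hB₁ : CoendBimSpec K V Ω₁ B₁) (hB₂ : CoendBimSpec K V Ω₂ B₂)

lemma psiAux_add (X₁ : C₁) (X₂ : C₂)
    (g g' : (RT (Ω₁.obj X₁) (Ω₂.obj X₂)).M →ₗ[K] K) :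
    psiAux Ω₁ Ω₂ B₁ B₂ hB₁ hB₂ X₁ X₂ (g + g')
      = psiAux Ω₁ Ω₂ B₁ B₂ hB₁ hB₂ X₁ X₂ g + psiAux Ω₁ Ω₂ B₁ B₂ hB₁ hB₂ X₁ X₂ g' := by
  apply rt_hom_ext
  intro m₁ m₂
  rw [LinearMap.add_apply, psiAux_mk, psiAux_mk, psiAux_mk, psiAux0_apply, psiAux0_apply,
    psiAux0_apply, ← Finset.sum_add_distrib]
  apply Finset.sum_congr rfl
  intro i _
  rw [gslice_add, TensorProduct.add_tmul, map_add, TensorProduct.add_tmul, map_add]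

lemma psiAux_smul (X₁ : C₁) (X₂ : C₂) (c : K)
    (g : (RT (Ω₁.obj X₁) (Ω₂.obj X₂)).M →ₗ[K] K) :
    psiAux Ω₁ Ω₂ B₁ B₂ hB₁ hB₂ X₁ X₂ (c • g)
      = c • psiAux Ω₁ Ω₂ B₁ B₂ hB₁ hB₂ X₁ X₂ g := by
  apply rt_hom_ext
  intro m₁ m₂
  rw [LinearMap.smul_apply, psiAux_mk, psiAux_mk, psiAux0_apply, psiAux0_apply,
    Finset.smul_sum]
  apply Finset.sum_congr rfl
  intro i _
  rw [gslice_smul, ← TensorProduct.smul_tmul', map_smul, ← TensorProduct.smul_tmul',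
    map_smul]

lemma psiAux_dinat {X₁ Y₁ : C₁} {X₂ Y₂ : C₂} (u₁ : X₁ ⟶ Y₁) (u₂ : X₂ ⟶ Y₂)
    (g : (RT (Ω₁.obj Y₁) (Ω₂.obj Y₂)).M →ₗ[K] K) :
    psiAux Ω₁ Ω₂ B₁ B₂ hB₁ hB₂ X₁ X₂ (g ∘ₗ (RTmap (Ω₁.map u₁) (Ω₂.map u₂)).1)
      = psiAux Ω₁ Ω₂ B₁ B₂ hB₁ hB₂ Y₁ Y₂ g ∘ₗ (RTmap (Ω₁.map u₁) (Ω₂.map u₂)).1 := by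
  apply rt_hom_ext
  intro m₁ m₂
  rw [LinearMap.comp_apply, RTmap_mk, psiAux_mk, psiAux_mk, psiAux0_apply, psiAux0_apply]
  have step1 : ∀ i : Fin (Module.finrank K (Ω₂.obj X₂).M),
      (dbal K V B₁ B₂).mkQ
        ((coendK K V Ω₁ X₁
            ((gslice (Ω₁.obj X₁) (Ω₂.obj X₂) (g ∘ₗ (RTmap (Ω₁.map u₁) (Ω₂.map u₂)).1)
                (Module.finBasis K (Ω₂.obj X₂).M i)) ⊗ₜ[K] m₁)) ⊗ₜ[K]
          (coendK K V Ω₂ X₂ (((Module.finBasis K (Ω₂.obj X₂).M).coord i) ⊗ₜ[K] m₂)))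
      = ∑ j : Fin (Module.finrank K (Ω₂.obj Y₂).M),
          (Module.finBasis K (Ω₂.obj Y₂).M).coord j
              ((Ω₂.map u₂).1 (Module.finBasis K (Ω₂.obj X₂).M i)) •
            (dbal K V B₁ B₂).mkQ
              ((coendK K V Ω₁ Y₁
                  ((gslice (Ω₁.obj Y₁) (Ω₂.obj Y₂) g (Module.finBasis K (Ω₂.obj Y₂).M j))
                    ⊗ₜ[K] (Ω₁.map u₁).1 m₁)) ⊗ₜ[K]
                (coendK K V Ω₂ X₂ (((Module.finBasis K (Ω₂.obj X₂).M).coord i) ⊗ₜ[K] m₂))) := by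
    intro i
    have hrep : (Ω₂.map u₂).1 (Module.finBasis K (Ω₂.obj X₂).M i)
        = ∑ j : Fin (Module.finrank K (Ω₂.obj Y₂).M),
            (Module.finBasis K (Ω₂.obj Y₂).M).coord j
                ((Ω₂.map u₂).1 (Module.finBasis K (Ω₂.obj X₂).M i)) •
              Module.finBasis K (Ω₂.obj Y₂).M j := by
      simp only [Module.Basis.coord_apply]
      exact ((Module.finBasis K (Ω₂.obj Y₂).M).sum_repr _).symm
    rw [gslice_dinat, coendK_dinat]
    conv_lhs => rw [hrep, gslice_sum]
    rw [TensorProduct.sum_tmul]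
    simp only [← TensorProduct.smul_tmul', map_sum, map_smul, TensorProduct.sum_tmul]
  rw [Finset.sum_congr rfl (fun i _ => step1 i), Finset.sum_comm]
  apply Finset.sum_congr rfl
  intro j _
  have h3 : ∑ i : Fin (Module.finrank K (Ω₂.obj X₂).M),
      (Module.finBasis K (Ω₂.obj Y₂).M).coord j
          ((Ω₂.map u₂).1 (Module.finBasis K (Ω₂.obj X₂).M i)) •
        coendK K V Ω₂ X₂ (((Module.finBasis K (Ω₂.obj X₂).M).coord i) ⊗ₜ[K] m₂)
      = coendK K V Ω₂ Y₂ (((Module.finBasis K (Ω₂.obj Y₂).M).coord j) ⊗ₜ[K]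
          (Ω₂.map u₂).1 m₂) := by
    rw [← coendK_dinat Ω₂ u₂]
    simp only [← map_smul, TensorProduct.smul_tmul']
    rw [← map_sum, ← TensorProduct.sum_tmul]
    congr 1
    congr 1
    have hc := (Module.finBasis K (Ω₂.obj X₂).M).sum_dual_apply_smul_coord
      (((Module.finBasis K (Ω₂.obj Y₂).M).coord j) ∘ₗ (Ω₂.map u₂).1)
    simpa using hc
  rw [← h3, TensorProduct.tmul_sum, map_sum]
  apply Finset.sum_congr rfl
  intro i _
  rw [TensorProduct.tmul_smul, map_smul]

/-- The inverse map `Ψ : C(Ω₁ ⊗_R Ω₂) → C(Ω₁) ⊗_E C(Ω₂)`. -/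
noncomputable def Psi : CoendT K V (prodOmega K V Ω₁ Ω₂) →ₗ[K] DTensor K V B₁ B₂ := by
  refine Submodule.liftQ _ (Finsupp.linearCombination K
    (fun a : Σ P : C₁ × C₂,
        (((prodOmega K V Ω₁ Ω₂).obj P).M →ₗ[K] K) × ((prodOmega K V Ω₁ Ω₂).obj P).M =>
      psiAux Ω₁ Ω₂ B₁ B₂ hB₁ hB₂ a.1.1 a.1.2 a.2.1 a.2.2)) ?_
  rw [coendRel, Submodule.span_le]
  rintro z ((((⟨X, g, g', m, rfl⟩ | ⟨X, c, g, m, rfl⟩) | ⟨X, g, m, m', rfl⟩) |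
    ⟨X, c, g, m, rfl⟩) | ⟨X, Y, u, g, m, rfl⟩) <;>
    simp only [SetLike.mem_coe, LinearMap.mem_ker, map_sub, map_smul,
      Finsupp.linearCombination_single, one_smul, sub_eq_zero]
  · rw [psiAux_add, LinearMap.add_apply]; abel
  · rw [psiAux_smul, LinearMap.smul_apply]
  · rw [map_add]; abel
  · exact LinearMap.congr_fun
      (psiAux_dinat Ω₁ Ω₂ B₁ B₂ hB₁ hB₂ u.1 u.2 g) m

lemma Psi_k (X₁ : C₁) (X₂ : C₂)
    (g : ((prodOmega K V Ω₁ Ω₂).obj (X₁, X₂)).M →ₗ[K] K)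
    (w : ((prodOmega K V Ω₁ Ω₂).obj (X₁, X₂)).M) :
    Psi Ω₁ Ω₂ B₁ B₂ hB₁ hB₂ (coendK K V (prodOmega K V Ω₁ Ω₂) (X₁, X₂) (g ⊗ₜ[K] w))
      = psiAux Ω₁ Ω₂ B₁ B₂ hB₁ hB₂ X₁ X₂ g w := by
  rw [coendK_tmul, Psi, Submodule.mkQ_apply]
  erw [Submodule.liftQ_apply]
  simp

end Aux5
section Aux6

open CategoryTheory

variable {K : Type} [Field K] {V : Type} [Fintype V] [DecidableEq V]

lemma EBim.eL_eL {C : Type} [AddCommGroup C] [Module K C] (B : EBim K V C)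
    (p q : V × V) (c : C) :
    B.eL p (B.eL q c) = if p = q then B.eL p c else 0 := by
  have h := LinearMap.congr_fun (B.eL_orth p q) c
  by_cases hpq : p = q <;> simp [hpq] at h ⊢ <;> exact h

lemma EBim.sum_eL_apply {C : Type} [AddCommGroup C] [Module K C] (B : EBim K V C)
    (c : C) : ∑ p : V × V, B.eL p c = c := by
  have h := LinearMap.congr_fun B.sum_eL c
  simpa using h

/-- The key collapse identity in `C ⊗_E D`. -/
lemma dt_collapse {C D : Type} [AddCommGroup C] [Module K C] [AddCommGroup D] [Module K D]
    (B₁ : EBim K V C) (B₂ : EBim K V D) (c : C) (d : D) :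
    ∑ l : V, (dbal K V B₁ B₂).mkQ
        ((∑ m : V, B₁.eR (l, m) c) ⊗ₜ[K] (∑ m : V, B₂.eL (l, m) d))
      = (dbal K V B₁ B₂).mkQ (c ⊗ₜ[K] d) := by
  have step : ∀ l : V,
      (dbal K V B₁ B₂).mkQ ((∑ m : V, B₁.eR (l, m) c) ⊗ₜ[K] (∑ m : V, B₂.eL (l, m) d))
        = ∑ m : V, (dbal K V B₁ B₂).mkQ (c ⊗ₜ[K] B₂.eL (l, m) d) := by
    intro l
    rw [TensorProduct.sum_tmul, map_sum]
    apply Finset.sum_congr rfl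
    intro m _
    rw [TensorProduct.tmul_sum, map_sum]
    have hterm : ∀ x : V, (dbal K V B₁ B₂).mkQ ((B₁.eR (l, m)) c ⊗ₜ[K] (B₂.eL (l, x)) d)
        = (dbal K V B₁ B₂).mkQ (c ⊗ₜ[K]
            (if ((l, m) : V × V) = (l, x) then B₂.eL (l, m) d else 0)) := by
      intro x
      rw [dt_rel, EBim.eL_eL]
    rw [Finset.sum_congr rfl (fun x _ => hterm x), Finset.sum_eq_single m]
    · simp
    · intro x _ hx
      rw [if_neg (by simp [Ne.symm hx])]
      simp
    · intro hm
      exact absurd (Finset.mem_univ m) hm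
  rw [Finset.sum_congr rfl (fun l _ => step l), ← Finset.sum_product']
  have : ∑ p ∈ Finset.univ ×ˢ Finset.univ,
      (dbal K V B₁ B₂).mkQ (c ⊗ₜ[K] B₂.eL p d)
      = (dbal K V B₁ B₂).mkQ (c ⊗ₜ[K] ∑ p : V × V, B₂.eL p d) := by
    rw [TensorProduct.tmul_sum, map_sum]
    rfl
  rw [this, EBim.sum_eL_apply]

variable {C : Type} [SmallCategory C]

/-- `Σ_μ (κ(h ⊗ m)) l̊μ = κ((h ∘ aR_l) ⊗ m)`. -/
lemma kappa_eR_sum2 (Ω : C ⥤ Bmd K V) (B : EBim K V (CoendT K V Ω))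
    (hB : CoendBimSpec K V Ω B) (l : V) (X : C) (h : (Ω.obj X).M →ₗ[K] K)
    (m : (Ω.obj X).M) :
    ∑ mu : V, B.eR (l, mu) (coendK K V Ω X (h ⊗ₜ[K] m))
      = coendK K V Ω X ((h ∘ₗ (Ω.obj X).aR l) ⊗ₜ[K] m) := by
  have : ∀ mu : V, B.eR (l, mu) (coendK K V Ω X (h ⊗ₜ[K] m))
      = coendK K V Ω X ((h ∘ₗ (Ω.obj X).aR l) ⊗ₜ[K] ((Ω.obj X).aR mu m)) :=
    fun mu => (hB (l, mu) X h m).2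
  rw [Finset.sum_congr rfl (fun mu _ => this mu), ← map_sum, ← TensorProduct.tmul_sum,
    Bmd.sum_aR_apply]

lemma kappa_eL_sum2 (Ω : C ⥤ Bmd K V) (B : EBim K V (CoendT K V Ω))
    (hB : CoendBimSpec K V Ω B) (l : V) (X : C) (h : (Ω.obj X).M →ₗ[K] K)
    (m : (Ω.obj X).M) :
    ∑ mu : V, B.eL (l, mu) (coendK K V Ω X (h ⊗ₜ[K] m))
      = coendK K V Ω X ((h ∘ₗ (Ω.obj X).aL l) ⊗ₜ[K] m) := by
  have : ∀ mu : V, B.eL (l, mu) (coendK K V Ω X (h ⊗ₜ[K] m))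
      = coendK K V Ω X ((h ∘ₗ (Ω.obj X).aL l) ⊗ₜ[K] ((Ω.obj X).aL mu m)) :=
    fun mu => (hB (l, mu) X h m).1
  rw [Finset.sum_congr rfl (fun mu _ => this mu), ← map_sum, ← TensorProduct.tmul_sum,
    Bmd.sum_aL_apply]

end Aux6
section Aux7

open CategoryTheory

variable {K : Type} [Field K] {V : Type} [Fintype V] [DecidableEq V]
variable {C₁ C₂ : Type} [SmallCategory C₁] [SmallCategory C₂]
variable (Ω₁ : C₁ ⥤ Bmd K V) (Ω₂ : C₂ ⥤ Bmd K V)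
variable (B₁ : EBim K V (CoendT K V Ω₁)) (B₂ : EBim K V (CoendT K V Ω₂))
variable (hB₁ : CoendBimSpec K V Ω₁ B₁) (hB₂ : CoendBimSpec K V Ω₂ B₂)

/-- Extensionality for maps out of `C(Ω₁) ⊗_E C(Ω₂)` on doubly-generating elements. -/
lemma dtensor_coend_ext {P : Type} [AddCommGroup P] [Module K P]
    {f g : DTensor K V B₁ B₂ →ₗ[K] P}
    (h : ∀ (X₁ : C₁) (f₁ : (Ω₁.obj X₁).M →ₗ[K] K) (m₁ : (Ω₁.obj X₁).M)
      (X₂ : C₂) (f₂ : (Ω₂.obj X₂).M →ₗ[K] K) (m₂ : (Ω₂.obj X₂).M),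
      f ((dbal K V B₁ B₂).mkQ
          ((coendK K V Ω₁ X₁ (f₁ ⊗ₜ[K] m₁)) ⊗ₜ[K] (coendK K V Ω₂ X₂ (f₂ ⊗ₜ[K] m₂))))
        = g ((dbal K V B₁ B₂).mkQ
          ((coendK K V Ω₁ X₁ (f₁ ⊗ₜ[K] m₁)) ⊗ₜ[K] (coendK K V Ω₂ X₂ (f₂ ⊗ₜ[K] m₂))))) :
    f = g := by
  apply Submodule.linearMap_qext
  apply TensorProduct.ext
  apply coend_hom_ext
  intro X₁ f₁ m₁
  apply coend_hom_ext
  intro X₂ f₂ m₂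
  have h' := h X₁ f₁ m₁ X₂ f₂ m₂
  simp only [Submodule.mkQ_apply] at h'
  simpa using h'

/-- Extensionality for maps out of `C(Ω₁ ⊗_R Ω₂)`. -/
lemma coendp_hom_ext {P : Type} [AddCommGroup P] [Module K P]
    {f g : CoendT K V (prodOmega K V Ω₁ Ω₂) →ₗ[K] P}
    (h : ∀ (X₁ : C₁) (X₂ : C₂) (t : ((prodOmega K V Ω₁ Ω₂).obj (X₁, X₂)).M →ₗ[K] K)
      (m₁ : (Ω₁.obj X₁).M) (m₂ : (Ω₂.obj X₂).M),
      f (coendK K V (prodOmega K V Ω₁ Ω₂) (X₁, X₂)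
          (t ⊗ₜ[K] (rbal (Ω₁.obj X₁) (Ω₂.obj X₂)).mkQ (m₁ ⊗ₜ[K] m₂)))
        = g (coendK K V (prodOmega K V Ω₁ Ω₂) (X₁, X₂)
          (t ⊗ₜ[K] (rbal (Ω₁.obj X₁) (Ω₂.obj X₂)).mkQ (m₁ ⊗ₜ[K] m₂)))) : f = g := by
  apply coend_hom_ext
  rintro ⟨X₁, X₂⟩ t w
  have hext : f ∘ₗ coendK K V (prodOmega K V Ω₁ Ω₂) (X₁, X₂) ∘ₗ
        TensorProduct.mk K _ _ t
      = g ∘ₗ coendK K V (prodOmega K V Ω₁ Ω₂) (X₁, X₂) ∘ₗ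
        TensorProduct.mk K _ _ t := by
    apply rt_hom_ext (Ω₁.obj X₁) (Ω₂.obj X₂)
    intro m₁ m₂
    simpa using h X₁ X₂ t m₁ m₂
  simpa using LinearMap.congr_fun hext w

lemma gslice_theta (M N : Bmd K V) (f₁ : M.M →ₗ[K] K) (f₂ : N.M →ₗ[K] K) (n : N.M) :
    gslice M N (theta M N f₁ f₂) n = ∑ l : V, f₂ (N.aL l n) • (f₁ ∘ₗ M.aR l) := by
  ext m
  simp only [gslice_apply, theta_apply, LinearMap.coe_sum, Finset.sum_apply,
    LinearMap.smul_apply, LinearMap.comp_apply, smul_eq_mul]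
  rw [theta_apply]
  apply Finset.sum_congr rfl
  intro l _
  ring

lemma theta_gslice_sum (M N : Bmd K V) (g : (RT M N).M →ₗ[K] K) :
    ∑ i : Fin (Module.finrank K N.M),
        theta M N (gslice M N g (Module.finBasis K N.M i)) ((Module.finBasis K N.M).coord i)
      = g := by
  apply rt_hom_ext
  intro m n
  rw [LinearMap.sum_apply]
  have step : ∀ i : Fin (Module.finrank K N.M),
      theta M N (gslice M N g (Module.finBasis K N.M i))
          ((Module.finBasis K N.M).coord i) ((rbal M N).mkQ (m ⊗ₜ[K] n))
        = ∑ l : V, (Module.finBasis K N.M).coord i (N.aL l n) *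
            g ((rbal M N).mkQ ((M.aR l m) ⊗ₜ[K] Module.finBasis K N.M i)) := by
    intro i
    rw [theta_apply]
    apply Finset.sum_congr rfl
    intro l _
    rw [gslice_apply, mul_comm]
  rw [Finset.sum_congr rfl (fun i _ => step i), Finset.sum_comm]
  have hl : ∀ l : V, (∑ i : Fin (Module.finrank K N.M),
      (Module.finBasis K N.M).coord i (N.aL l n) *
        g ((rbal M N).mkQ ((M.aR l m) ⊗ₜ[K] Module.finBasis K N.M i)))
      = g ((rbal M N).mkQ (m ⊗ₜ[K] N.aL l n)) := by
    intro l
    have hq : (rbal M N).mkQ ((M.aR l m) ⊗ₜ[K] (N.aL l n))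
        = ∑ i : Fin (Module.finrank K N.M),
            (Module.finBasis K N.M).coord i (N.aL l n) •
              (rbal M N).mkQ ((M.aR l m) ⊗ₜ[K] Module.finBasis K N.M i) := by
      conv_lhs => rw [← Module.Basis.sum_repr (Module.finBasis K N.M) (N.aL l n)]
      rw [TensorProduct.tmul_sum, map_sum]
      apply Finset.sum_congr rfl
      intro i _
      rw [TensorProduct.tmul_smul, map_smul, Module.Basis.coord_apply]
    have h2 : (rbal M N).mkQ ((M.aR l m) ⊗ₜ[K] (N.aL l n))
        = (rbal M N).mkQ (m ⊗ₜ[K] N.aL l n) := by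
      rw [rt_rel, Bmd.aL_aL, if_pos rfl]
    rw [← h2, hq, map_sum]
    apply Finset.sum_congr rfl
    intro i _
    rw [map_smul, smul_eq_mul]
  rw [Finset.sum_congr rfl (fun l _ => hl l), ← map_sum]
  congr 1
  have hms : ∑ x : V, (rbal M N).mkQ (m ⊗ₜ[K] (N.aL x) n)
      = (rbal M N).mkQ (∑ x : V, m ⊗ₜ[K] (N.aL x) n) := (map_sum _ _ _).symm
  rw [hms, ← TensorProduct.tmul_sum, Bmd.sum_aL_apply]

/-- `Φ ∘ Ψ = id`. -/
lemma Phi_Psi : Phi Ω₁ Ω₂ B₁ B₂ hB₁ hB₂ ∘ₗ Psi Ω₁ Ω₂ B₁ B₂ hB₁ hB₂ = LinearMap.id := by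
  apply coendp_hom_ext
  intro X₁ X₂ t m₁ m₂
  rw [LinearMap.comp_apply, LinearMap.id_apply, Psi_k, psiAux_mk, psiAux0_apply, map_sum]
  have step : ∀ i : Fin (Module.finrank K (Ω₂.obj X₂).M),
      Phi Ω₁ Ω₂ B₁ B₂ hB₁ hB₂ ((dbal K V B₁ B₂).mkQ
          ((coendK K V Ω₁ X₁
            ((gslice (Ω₁.obj X₁) (Ω₂.obj X₂) t (Module.finBasis K (Ω₂.obj X₂).M i)) ⊗ₜ[K] m₁))
            ⊗ₜ[K]
          (coendK K V Ω₂ X₂ (((Module.finBasis K (Ω₂.obj X₂).M).coord i) ⊗ₜ[K] m₂))))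
        = coendK K V (prodOmega K V Ω₁ Ω₂) (X₁, X₂)
            ((theta (Ω₁.obj X₁) (Ω₂.obj X₂)
                (gslice (Ω₁.obj X₁) (Ω₂.obj X₂) t (Module.finBasis K (Ω₂.obj X₂).M i))
                ((Module.finBasis K (Ω₂.obj X₂).M).coord i)) ⊗ₜ[K]
              (rbal (Ω₁.obj X₁) (Ω₂.obj X₂)).mkQ (m₁ ⊗ₜ[K] m₂)) :=
    fun i => Phi_k Ω₁ Ω₂ B₁ B₂ hB₁ hB₂ X₁ _ m₁ X₂ _ m₂
  rw [Finset.sum_congr rfl (fun i _ => step i), ← map_sum, ← TensorProduct.sum_tmul,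
    theta_gslice_sum]

/-- `Ψ ∘ Φ = id`. -/
lemma Psi_Phi : Psi Ω₁ Ω₂ B₁ B₂ hB₁ hB₂ ∘ₗ Phi Ω₁ Ω₂ B₁ B₂ hB₁ hB₂ = LinearMap.id := by
  apply dtensor_coend_ext Ω₁ Ω₂
  intro X₁ f₁ m₁ X₂ f₂ m₂
  rw [LinearMap.comp_apply, LinearMap.id_apply, Phi_k, Psi_k, psiAux_mk, psiAux0_apply]
  have step : ∀ i : Fin (Module.finrank K (Ω₂.obj X₂).M),
      (dbal K V B₁ B₂).mkQ
          ((coendK K V Ω₁ X₁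
            ((gslice (Ω₁.obj X₁) (Ω₂.obj X₂) (theta (Ω₁.obj X₁) (Ω₂.obj X₂) f₁ f₂)
                (Module.finBasis K (Ω₂.obj X₂).M i)) ⊗ₜ[K] m₁)) ⊗ₜ[K]
          (coendK K V Ω₂ X₂ (((Module.finBasis K (Ω₂.obj X₂).M).coord i) ⊗ₜ[K] m₂)))
        = ∑ l : V, f₂ ((Ω₂.obj X₂).aL l (Module.finBasis K (Ω₂.obj X₂).M i)) •
            (dbal K V B₁ B₂).mkQ
              ((coendK K V Ω₁ X₁ ((f₁ ∘ₗ (Ω₁.obj X₁).aR l) ⊗ₜ[K] m₁)) ⊗ₜ[K]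
                (coendK K V Ω₂ X₂ (((Module.finBasis K (Ω₂.obj X₂).M).coord i) ⊗ₜ[K] m₂))) := by
    intro i
    rw [gslice_theta, TensorProduct.sum_tmul]
    simp only [← TensorProduct.smul_tmul', map_sum, map_smul, TensorProduct.sum_tmul]
  rw [Finset.sum_congr rfl (fun i _ => step i), Finset.sum_comm]
  have hl : ∀ l : V, (∑ i : Fin (Module.finrank K (Ω₂.obj X₂).M),
      f₂ ((Ω₂.obj X₂).aL l (Module.finBasis K (Ω₂.obj X₂).M i)) •
        (dbal K V B₁ B₂).mkQ
          ((coendK K V Ω₁ X₁ ((f₁ ∘ₗ (Ω₁.obj X₁).aR l) ⊗ₜ[K] m₁)) ⊗ₜ[K]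
            (coendK K V Ω₂ X₂ (((Module.finBasis K (Ω₂.obj X₂).M).coord i) ⊗ₜ[K] m₂))))
      = (dbal K V B₁ B₂).mkQ
          ((coendK K V Ω₁ X₁ ((f₁ ∘ₗ (Ω₁.obj X₁).aR l) ⊗ₜ[K] m₁)) ⊗ₜ[K]
            (coendK K V Ω₂ X₂ ((f₂ ∘ₗ (Ω₂.obj X₂).aL l) ⊗ₜ[K] m₂))) := by
    intro l
    have hsum : ∑ i : Fin (Module.finrank K (Ω₂.obj X₂).M),
        f₂ ((Ω₂.obj X₂).aL l (Module.finBasis K (Ω₂.obj X₂).M i)) •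
          coendK K V Ω₂ X₂ (((Module.finBasis K (Ω₂.obj X₂).M).coord i) ⊗ₜ[K] m₂)
        = coendK K V Ω₂ X₂ ((f₂ ∘ₗ (Ω₂.obj X₂).aL l) ⊗ₜ[K] m₂) := by
      simp only [← map_smul, TensorProduct.smul_tmul']
      rw [← map_sum, ← TensorProduct.sum_tmul]
      congr 2
      have hc := (Module.finBasis K (Ω₂.obj X₂).M).sum_dual_apply_smul_coord
        (f₂ ∘ₗ (Ω₂.obj X₂).aL l)
      simpa using hc
    rw [← hsum, TensorProduct.tmul_sum, map_sum]
    apply Finset.sum_congr rfl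
    intro i _
    rw [TensorProduct.tmul_smul, map_smul]
  rw [Finset.sum_congr rfl (fun l _ => hl l)]
  have e1 : ∀ l : V, coendK K V Ω₁ X₁ ((f₁ ∘ₗ (Ω₁.obj X₁).aR l) ⊗ₜ[K] m₁)
      = ∑ mu : V, B₁.eR (l, mu) (coendK K V Ω₁ X₁ (f₁ ⊗ₜ[K] m₁)) :=
    fun l => (kappa_eR_sum2 Ω₁ B₁ hB₁ l X₁ f₁ m₁).symm
  have e2 : ∀ l : V, coendK K V Ω₂ X₂ ((f₂ ∘ₗ (Ω₂.obj X₂).aL l) ⊗ₜ[K] m₂)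
      = ∑ mu : V, B₂.eL (l, mu) (coendK K V Ω₂ X₂ (f₂ ⊗ₜ[K] m₂)) :=
    fun l => (kappa_eL_sum2 Ω₂ B₂ hB₂ l X₂ f₂ m₂).symm
  rw [Finset.sum_congr rfl (fun l _ => by rw [e1 l, e2 l])]
  exact dt_collapse B₁ B₂ _ _

end Aux7
section Aux8

open CategoryTheory

variable {K : Type} [Field K] {V : Type} [Fintype V] [DecidableEq V]

/-- The "identity tensor" of `M ⊗_R N` computed from bases of `M` and `N` via `θ`. -/
lemma tensor_id_eq (M N : Bmd K V) :
    (∑ j : Fin (Module.finrank K (RT M N).M),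
        (Module.finBasis K (RT M N).M j) ⊗ₜ[K] ((Module.finBasis K (RT M N).M).coord j))
      = ∑ i : Fin (Module.finrank K M.M), ∑ k : Fin (Module.finrank K N.M),
          ((rbal M N).mkQ ((Module.finBasis K M.M i) ⊗ₜ[K] (Module.finBasis K N.M k)))
            ⊗ₜ[K] (theta M N ((Module.finBasis K M.M).coord i)
              ((Module.finBasis K N.M).coord k)) := by
  apply (TensorProduct.comm K (RT M N).M (Module.Dual K (RT M N).M)).injective
  apply (dualTensorHomEquiv K (RT M N).M (RT M N).M).injective
  have he : ∀ (t : Module.Dual K (RT M N).M) (w u : (RT M N).M),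
      (dualTensorHomEquiv K (RT M N).M (RT M N).M) (t ⊗ₜ[K] w) u = t u • w := by
    intro t w u
    have h : (dualTensorHomEquiv K (RT M N).M (RT M N).M) (t ⊗ₜ[K] w)
        = dualTensorHom K (RT M N).M (RT M N).M (t ⊗ₜ[K] w) :=
      rfl
    rw [h, dualTensorHom_apply]
  have h1 : (dualTensorHomEquiv K (RT M N).M (RT M N).M)
      ((TensorProduct.comm K _ _)
        (∑ j : Fin (Module.finrank K (RT M N).M),
          (Module.finBasis K (RT M N).M j) ⊗ₜ[K] ((Module.finBasis K (RT M N).M).coord j)))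
      = LinearMap.id := by
    apply LinearMap.ext
    intro u
    simp only [map_sum, TensorProduct.comm_tmul, LinearMap.sum_apply, LinearMap.id_apply]
    rw [Finset.sum_congr rfl (fun j (_ : j ∈ Finset.univ) => he _ _ u)]
    simp only [Module.Basis.coord_apply]
    exact (Module.finBasis K (RT M N).M).sum_repr u
  have h2 : (dualTensorHomEquiv K (RT M N).M (RT M N).M)
      ((TensorProduct.comm K _ _)
        (∑ i : Fin (Module.finrank K M.M), ∑ k : Fin (Module.finrank K N.M),
          ((rbal M N).mkQ ((Module.finBasis K M.M i) ⊗ₜ[K] (Module.finBasis K N.M k)))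
            ⊗ₜ[K] (theta M N ((Module.finBasis K M.M).coord i)
              ((Module.finBasis K N.M).coord k))))
      = LinearMap.id := by
    apply rt_hom_ext
    intro m n
    simp only [map_sum, TensorProduct.comm_tmul, LinearMap.sum_apply, LinearMap.id_apply,
      Submodule.mkQ_apply]
    rw [Finset.sum_congr rfl (fun i (_ : i ∈ Finset.univ) => Finset.sum_congr rfl
      (fun k (_ : k ∈ Finset.univ) => by rw [he, theta_apply']))]
    have swap : ∑ i : Fin (Module.finrank K M.M), ∑ k : Fin (Module.finrank K N.M),
        (∑ l : V, (Module.finBasis K M.M).coord i (M.aR l m) *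
            (Module.finBasis K N.M).coord k (N.aL l n)) •
          Submodule.Quotient.mk (p := rbal M N)
            ((Module.finBasis K M.M i) ⊗ₜ[K] (Module.finBasis K N.M k))
        = ∑ l : V, ∑ i : Fin (Module.finrank K M.M), ∑ k : Fin (Module.finrank K N.M),
            ((Module.finBasis K M.M).coord i (M.aR l m) *
              (Module.finBasis K N.M).coord k (N.aL l n)) •
            Submodule.Quotient.mk (p := rbal M N)
              ((Module.finBasis K M.M i) ⊗ₜ[K] (Module.finBasis K N.M k)) := by
      simp only [Finset.sum_smul]
      rw [Finset.sum_congr rfl (fun i (_ : i ∈ Finset.univ) => Finset.sum_comm),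
        Finset.sum_comm]
    rw [swap]
    have hx : ∀ l : V, (∑ i : Fin (Module.finrank K M.M), ∑ k : Fin (Module.finrank K N.M),
        ((Module.finBasis K M.M).coord i (M.aR l m) *
          (Module.finBasis K N.M).coord k (N.aL l n)) •
        Submodule.Quotient.mk (p := rbal M N)
          ((Module.finBasis K M.M i) ⊗ₜ[K] (Module.finBasis K N.M k)))
        = (rbal M N).mkQ ((M.aR l m) ⊗ₜ[K] (N.aL l n)) := by
      intro l
      have hm : M.aR l m = ∑ i : Fin (Module.finrank K M.M),
          (Module.finBasis K M.M).coord i (M.aR l m) • Module.finBasis K M.M i := by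
        simp only [Module.Basis.coord_apply]
        exact ((Module.finBasis K M.M).sum_repr _).symm
      have hn : N.aL l n = ∑ k : Fin (Module.finrank K N.M),
          (Module.finBasis K N.M).coord k (N.aL l n) • Module.finBasis K N.M k := by
        simp only [Module.Basis.coord_apply]
        exact ((Module.finBasis K N.M).sum_repr _).symm
      conv_rhs => rw [hm, hn]
      rw [TensorProduct.sum_tmul, map_sum]
      apply Finset.sum_congr rfl
      intro i _
      rw [TensorProduct.tmul_sum, map_sum]
      apply Finset.sum_congr rfl
      intro k _
      rw [TensorProduct.tmul_smul, ← TensorProduct.smul_tmul', map_smul, map_smul, smul_smul,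
        Submodule.mkQ_apply]
      congr 1
      ring
    rw [Finset.sum_congr rfl (fun l _ => hx l)]
    have hfin : ∀ l : V, (rbal M N).mkQ ((M.aR l m) ⊗ₜ[K] (N.aL l n))
        = (rbal M N).mkQ (m ⊗ₜ[K] N.aL l n) := by
      intro l
      rw [rt_rel, Bmd.aL_aL, if_pos rfl]
    rw [Finset.sum_congr rfl (fun l _ => hfin l)]
    have hms : ∑ l : V, (rbal M N).mkQ (m ⊗ₜ[K] N.aL l n)
        = (rbal M N).mkQ (∑ l : V, m ⊗ₜ[K] N.aL l n) := (map_sum _ _ _).symm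
    rw [hms, ← TensorProduct.tmul_sum, Bmd.sum_aL_apply, Submodule.mkQ_apply]
  rw [h1, h2]

/-- Evaluate any bilinear map on the two expressions of the identity tensor. -/
lemma comul_id_key (M N : Bmd K V) {P : Type} [AddCommGroup P] [Module K P]
    (B : (RT M N).M →ₗ[K] Module.Dual K (RT M N).M →ₗ[K] P) :
    ∑ j : Fin (Module.finrank K (RT M N).M),
        B (Module.finBasis K (RT M N).M j) ((Module.finBasis K (RT M N).M).coord j)
      = ∑ i : Fin (Module.finrank K M.M), ∑ k : Fin (Module.finrank K N.M),
          B ((rbal M N).mkQ ((Module.finBasis K M.M i) ⊗ₜ[K] (Module.finBasis K N.M k)))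
            (theta M N ((Module.finBasis K M.M).coord i)
              ((Module.finBasis K N.M).coord k)) := by
  have h := congrArg (TensorProduct.lift B) (tensor_id_eq M N)
  simpa only [map_sum, TensorProduct.lift.tmul] using h

end Aux8
section Aux9

open CategoryTheory

variable {K : Type} [Field K] {V : Type} [Fintype V] [DecidableEq V]
variable {C : Type} [SmallCategory C]

lemma counit_pR (Ω : C ⥤ Bmd K V) (D : DressedStruct K V (CoendT K V Ω))
    (hD : CoendDressedSpec K V Ω D) (n : V) (X : C) (f : (Ω.obj X).M →ₗ[K] K)
    (m : (Ω.obj X).M) :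
    D.counit (D.toEBim.pR n (coendK K V Ω X (f ⊗ₜ[K] m))) = f ((Ω.obj X).aR n m) := by
  rw [EBim.pR, LinearMap.sum_apply, map_sum]
  have step : ∀ l : V, D.counit (D.eR (l, n) (coendK K V Ω X (f ⊗ₜ[K] m)))
      = f ((Ω.obj X).aR l ((Ω.obj X).aR n m)) := by
    intro l
    rw [(hD.2.2 (l, n) X f m).2, hD.2.1 X _ _]
    rfl
  rw [Finset.sum_congr rfl (fun l _ => step l), ← map_sum, Bmd.sum_aR_apply]

lemma counit_pL (Ω : C ⥤ Bmd K V) (D : DressedStruct K V (CoendT K V Ω))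
    (hD : CoendDressedSpec K V Ω D) (n : V) (X : C) (f : (Ω.obj X).M →ₗ[K] K)
    (m : (Ω.obj X).M) :
    D.counit (D.toEBim.pL n (coendK K V Ω X (f ⊗ₜ[K] m))) = f ((Ω.obj X).aL n m) := by
  rw [EBim.pL, LinearMap.sum_apply, map_sum]
  have step : ∀ l : V, D.counit (D.eL (l, n) (coendK K V Ω X (f ⊗ₜ[K] m)))
      = f ((Ω.obj X).aL l ((Ω.obj X).aL n m)) := by
    intro l
    rw [(hD.2.2 (l, n) X f m).1, hD.2.1 X _ _]
    rfl
  rw [Finset.sum_congr rfl (fun l _ => step l), ← map_sum, Bmd.sum_aL_apply]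

end Aux9
set_option maxHeartbeats 1000000
set_option synthInstance.maxHeartbeats 400000
section Stmt13

open CategoryTheory

variable (K : Type) [Field K] (V : Type) [Fintype V] [DecidableEq V]
variable {C₁ C₂ : Type} [SmallCategory C₁] [SmallCategory C₂]
variable (Ω₁ : C₁ ⥤ Bmd K V) (Ω₂ : C₂ ⥤ Bmd K V)

/-- The compatibility square for `φ₂`:
`φ₂ (κ^{Ω₁}_{X₁}(f₁ ⊗ m₁) ⊗_E κ^{Ω₂}_{X₂}(f₂ ⊗ m₂))`
equals `κ^{Ω₁ ⊗_R Ω₂}_{(X₁,X₂)}` applied to the image of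
`(f₁ ⊗ m₁) ⊗ (f₂ ⊗ m₂)` under the canonical isomorphism
`(Ω₁(X₁)* ⊗ Ω₁(X₁)) ⊗_E (Ω₂(X₂)* ⊗ Ω₂(X₂)) ≅
 (Ω₁(X₁) ⊗_R Ω₂(X₂))* ⊗ (Ω₁(X₁) ⊗_R Ω₂(X₂))`. -/
def Phi2Square (D₁ : DressedStruct K V (CoendT K V Ω₁))
    (D₂ : DressedStruct K V (CoendT K V Ω₂))
    (φ : DTensor K V D₁.toEBim D₂.toEBim →ₗ[K] CoendT K V (prodOmega K V Ω₁ Ω₂)) :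
    Prop :=
  ∀ (X₁ : C₁) (X₂ : C₂) (f₁ : (Ω₁.obj X₁).M →ₗ[K] K) (m₁ : (Ω₁.obj X₁).M)
    (f₂ : (Ω₂.obj X₂).M →ₗ[K] K) (m₂ : (Ω₂.obj X₂).M),
    φ ((dbal K V D₁.toEBim D₂.toEBim).mkQ
        ((coendK K V Ω₁ X₁ (f₁ ⊗ₜ[K] m₁)) ⊗ₜ[K] (coendK K V Ω₂ X₂ (f₂ ⊗ₜ[K] m₂)))) =
      coendK K V (prodOmega K V Ω₁ Ω₂) (X₁, X₂)
        ((theta (Ω₁.obj X₁) (Ω₂.obj X₂) f₁ f₂) ⊗ₜ[K]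
          ((rbal (Ω₁.obj X₁) (Ω₂.obj X₂)).mkQ (m₁ ⊗ₜ[K] m₂)))

/-- STATEMENT 13: for categories with `V`-faces `(C₁, Ω₁)` and `(C₂, Ω₂)`,
there is a unique isomorphism
`φ₂ : C(C₁, Ω₁) ⊗_E C(C₂, Ω₂) ≅ C((C₁, Ω₁) × (C₂, Ω₂))` of `V`-dressed
coalgebras compatible with the universal dinatural transformations. -/
theorem coend_prod_iso (D₁ : DressedStruct K V (CoendT K V Ω₁))
    (h₁ : CoendDressedSpec K V Ω₁ D₁)
    (D₂ : DressedStruct K V (CoendT K V Ω₂))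
    (h₂ : CoendDressedSpec K V Ω₂ D₂)
    (Dp : DressedStruct K V (CoendT K V (prodOmega K V Ω₁ Ω₂)))
    (hp : CoendDressedSpec K V (prodOmega K V Ω₁ Ω₂) Dp)
    (DT : DressedStruct K V (DTensor K V D₁.toEBim D₂.toEBim))
    (hT : IsDTensorStruct K V D₁ D₂ DT) :
    ∃ φ : DTensor K V D₁.toEBim D₂.toEBim →ₗ[K] CoendT K V (prodOmega K V Ω₁ Ω₂),
      (Function.Bijective φ ∧ IsDrMap K V DT Dp φ ∧
        Phi2Square K V Ω₁ Ω₂ D₁ D₂ φ) ∧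
      ∀ φ' : DTensor K V D₁.toEBim D₂.toEBim →ₗ[K] CoendT K V (prodOmega K V Ω₁ Ω₂),
        IsDrMap K V DT Dp φ' → Phi2Square K V Ω₁ Ω₂ D₁ D₂ φ' → φ' = φ := by
  classical
  refine ⟨Phi Ω₁ Ω₂ D₁.toEBim D₂.toEBim h₁.2.2 h₂.2.2, ⟨?_, ⟨?_, ?_, ?_, ?_⟩, ?_⟩, ?_⟩
  · -- bijective
    exact Function.bijective_iff_has_inverse.mpr
      ⟨Psi Ω₁ Ω₂ D₁.toEBim D₂.toEBim h₁.2.2 h₂.2.2,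
        fun x => LinearMap.congr_fun (Psi_Phi Ω₁ Ω₂ D₁.toEBim D₂.toEBim h₁.2.2 h₂.2.2) x,
        fun y => LinearMap.congr_fun (Phi_Psi Ω₁ Ω₂ D₁.toEBim D₂.toEBim h₁.2.2 h₂.2.2) y⟩
  · -- comul
    have hmap : Dp.comul ∘ₗ Phi Ω₁ Ω₂ D₁.toEBim D₂.toEBim h₁.2.2 h₂.2.2
        = TensorProduct.map (Phi Ω₁ Ω₂ D₁.toEBim D₂.toEBim h₁.2.2 h₂.2.2)
            (Phi Ω₁ Ω₂ D₁.toEBim D₂.toEBim h₁.2.2 h₂.2.2) ∘ₗ DT.comul := by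
      apply dtensor_coend_ext Ω₁ Ω₂ D₁.toEBim D₂.toEBim
      intro X₁ f₁ m₁ X₂ f₂ m₂
      simp only [LinearMap.comp_apply]
      rw [Phi_k, hp.1 (X₁, X₂) _ inferInstance
        (Module.finBasis K (RT (Ω₁.obj X₁) (Ω₂.obj X₂)).M)
        (theta (Ω₁.obj X₁) (Ω₂.obj X₂) f₁ f₂)
        ((rbal (Ω₁.obj X₁) (Ω₂.obj X₂)).mkQ (m₁ ⊗ₜ[K] m₂))]
      rw [hT.1, h₁.1 X₁ _ inferInstance (Module.finBasis K (Ω₁.obj X₁).M) f₁ m₁,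
        h₂.1 X₂ _ inferInstance (Module.finBasis K (Ω₂.obj X₂).M) f₂ m₂]
      simp only [TensorProduct.sum_tmul, TensorProduct.tmul_sum, map_sum,
        TensorProduct.tensorTensorTensorComm_tmul, TensorProduct.map_tmul]
      have hkey := comul_id_key (Ω₁.obj X₁) (Ω₂.obj X₂)
        (LinearMap.mk₂ K
          (fun (v : (RT (Ω₁.obj X₁) (Ω₂.obj X₂)).M)
              (h : Module.Dual K (RT (Ω₁.obj X₁) (Ω₂.obj X₂)).M) =>
            (coendK K V (prodOmega K V Ω₁ Ω₂) (X₁, X₂)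
                (theta (Ω₁.obj X₁) (Ω₂.obj X₂) f₁ f₂ ⊗ₜ[K] v)) ⊗ₜ[K]
            (coendK K V (prodOmega K V Ω₁ Ω₂) (X₁, X₂)
                (h ⊗ₜ[K] (rbal (Ω₁.obj X₁) (Ω₂.obj X₂)).mkQ (m₁ ⊗ₜ[K] m₂))))
          (fun v v' h => by
            beta_reduce
            rw [TensorProduct.tmul_add, map_add, TensorProduct.add_tmul])
          (fun c v h => by
            beta_reduce
            rw [TensorProduct.tmul_smul, map_smul, ← TensorProduct.smul_tmul'])
          (fun v h h' => by
            beta_reduce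
            rw [TensorProduct.add_tmul, map_add, TensorProduct.tmul_add])
          (fun c v h => by
            beta_reduce
            rw [← TensorProduct.smul_tmul', map_smul, TensorProduct.tmul_smul]))
      simp only [LinearMap.mk₂_apply] at hkey
      erw [hkey]
      rw [Finset.sum_comm]
      apply Finset.sum_congr rfl
      intro i _
      apply Finset.sum_congr rfl
      intro k _
      rw [Phi_k, Phi_k]
    intro c
    exact LinearMap.congr_fun hmap c
  · -- counit
    have hmap : Dp.counit ∘ₗ Phi Ω₁ Ω₂ D₁.toEBim D₂.toEBim h₁.2.2 h₂.2.2 = DT.counit := by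
      apply dtensor_coend_ext Ω₁ Ω₂ D₁.toEBim D₂.toEBim
      intro X₁ f₁ m₁ X₂ f₂ m₂
      simp only [LinearMap.comp_apply]
      rw [Phi_k, hp.2.1 (X₁, X₂)]
      erw [theta_apply]
      rw [hT.2.1]
      apply Finset.sum_congr rfl
      intro n _
      rw [counit_pR Ω₁ D₁ h₁ n X₁ f₁ m₁, counit_pL Ω₂ D₂ h₂ n X₂ f₂ m₂]
    intro c
    exact LinearMap.congr_fun hmap c
  · -- eL
    intro p c
    have hmap : Phi Ω₁ Ω₂ D₁.toEBim D₂.toEBim h₁.2.2 h₂.2.2 ∘ₗ DT.eL p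
        = Dp.eL p ∘ₗ Phi Ω₁ Ω₂ D₁.toEBim D₂.toEBim h₁.2.2 h₂.2.2 := by
      apply dtensor_coend_ext Ω₁ Ω₂ D₁.toEBim D₂.toEBim
      intro X₁ f₁ m₁ X₂ f₂ m₂
      simp only [LinearMap.comp_apply]
      rw [hT.2.2.1, (h₁.2.2 p X₁ f₁ m₁).1, Phi_k, Phi_k,
        (hp.2.2 p (X₁, X₂) (theta (Ω₁.obj X₁) (Ω₂.obj X₂) f₁ f₂)
          ((rbal (Ω₁.obj X₁) (Ω₂.obj X₂)).mkQ (m₁ ⊗ₜ[K] m₂))).1,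
        theta_comp_aL]
      rfl
    exact LinearMap.congr_fun hmap c
  · -- eR
    intro p c
    have hmap : Phi Ω₁ Ω₂ D₁.toEBim D₂.toEBim h₁.2.2 h₂.2.2 ∘ₗ DT.eR p
        = Dp.eR p ∘ₗ Phi Ω₁ Ω₂ D₁.toEBim D₂.toEBim h₁.2.2 h₂.2.2 := by
      apply dtensor_coend_ext Ω₁ Ω₂ D₁.toEBim D₂.toEBim
      intro X₁ f₁ m₁ X₂ f₂ m₂
      simp only [LinearMap.comp_apply]
      rw [hT.2.2.2, (h₂.2.2 p X₂ f₂ m₂).2, Phi_k, Phi_k,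
        (hp.2.2 p (X₁, X₂) (theta (Ω₁.obj X₁) (Ω₂.obj X₂) f₁ f₂)
          ((rbal (Ω₁.obj X₁) (Ω₂.obj X₂)).mkQ (m₁ ⊗ₜ[K] m₂))).2,
        theta_comp_aR]
      rfl
    exact LinearMap.congr_fun hmap c
  · -- square
    intro X₁ X₂ f₁ m₁ f₂ m₂
    exact Phi_k Ω₁ Ω₂ D₁.toEBim D₂.toEBim h₁.2.2 h₂.2.2 X₁ f₁ m₁ X₂ f₂ m₂
  · -- uniqueness
    intro φ' _ hsq
    apply dtensor_coend_ext Ω₁ Ω₂ D₁.toEBim D₂.toEBim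
    intro X₁ f₁ m₁ X₂ f₂ m₂
    rw [hsq X₁ X₂ f₁ m₁ f₂ m₂,
      Phi_k Ω₁ Ω₂ D₁.toEBim D₂.toEBim h₁.2.2 h₂.2.2 X₁ f₁ m₁ X₂ f₂ m₂]


end Stmt13
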